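/- arXiv:2406.16648 — 5 statements merged into one kernel-verified Lean document; each statement's English description precedes it below -/
import Mathlib

section
/- Let λ ∈ ℂ^× and N, ρ ≥ 1. The matrix R_N(J_ρ(λ)) := J_N ⊗ I_ρ + K_N^{N−1} ⊗ J_ρ(λ) of size Nρ is similar (via a permutation matrix) to the block matrix I_ρ ⊗ J_N + J_ρ(λ) ⊗ K_N^{N−1}, which is block upper triangular with ρ diagonal blocks each equal to R_N(λ). Consequently, the characteristic polynomial of R_N(J_ρ(λ)) equals (t^N − λ)^ρ. -/
/-!
Swapping the two tensor factors turns `RNJ N ρ λ` into `I_ρ ⊗ J_N + J_ρ(λ) ⊗ K_N^{N-1}`. Since `I_ρ`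
and `J_ρ(λ)` are upper triangular, this matrix is block upper triangular and each diagonal block is
`R_N(λ) = J_N + λ K_N^{N-1}`, which is `J_N` with `λ` added in the bottom-left corner. The
determinant is linear in the last row, so `χ(R_N(λ)) = χ(J_N) - λ c = X^N - λ c`, where `c` is
the cofactor of `X - J_N` at that corner: its minor is triangular with diagonal `-1`, and the two
signs cancel to give `c = 1`.
-/

open Matrix Kronecker Polynomial

/-- The `N × N` nilpotent Jordan block `J_N` (1's on the superdiagonal). -/
noncomputable def nilJ (N : ℕ) : Matrix (Fin N) (Fin N) ℂ :=
  Matrix.of fun i j => if (i : ℕ) + 1 = (j : ℕ) then 1 else 0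

/-- The `ρ × ρ` Jordan block with eigenvalue `λ`. -/
noncomputable def jordanBlock (ρ : ℕ) (lam : ℂ) : Matrix (Fin ρ) (Fin ρ) ℂ :=
  Matrix.of fun i j => if i = j then lam else if (i : ℕ) + 1 = (j : ℕ) then 1 else 0

/-- `R_N(J_ρ(λ)) = J_N ⊗ I_ρ + K_N^{N-1} ⊗ J_ρ(λ)` where `K_N = J_Nᵀ`. -/
noncomputable def RNJ (N ρ : ℕ) (lam : ℂ) : Matrix (Fin N × Fin ρ) (Fin N × Fin ρ) ℂ :=
  nilJ N ⊗ₖ (1 : Matrix (Fin ρ) (Fin ρ) ℂ) + ((nilJ N)ᵀ ^ (N - 1)) ⊗ₖ jordanBlock ρ lam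

/-- The block matrix `I_ρ ⊗ J_N + J_ρ(λ) ⊗ K_N^{N-1}`. -/
noncomputable def blockForm (N ρ : ℕ) (lam : ℂ) : Matrix (Fin ρ × Fin N) (Fin ρ × Fin N) ℂ :=
  (1 : Matrix (Fin ρ) (Fin ρ) ℂ) ⊗ₖ nilJ N + jordanBlock ρ lam ⊗ₖ ((nilJ N)ᵀ ^ (N - 1))

namespace Matrix

theorem kronecker_submatrix_swap {S l m n p : Type*} [CommMagma S] (A : Matrix l m S)
    (B : Matrix n p S) :
    (A ⊗ₖ B).submatrix Prod.swap Prod.swap = B ⊗ₖ A := by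
  ext ⟨i, k⟩ ⟨j, l⟩
  simp [mul_comm]

theorem BlockTriangular.kronecker_left {S α l n : Type*} [MulZeroClass S] [LT α]
    {A : Matrix l l S} {b : l → α} (hA : A.BlockTriangular b) (B : Matrix n n S) :
    (A ⊗ₖ B).BlockTriangular fun p => b p.1 := by
  intro p q hpq
  simp [hA hpq]

variable {R : Type*} [CommRing R]

theorem det_toSquareBlock_fst {α n : Type*} [Fintype α] [DecidableEq α] [Fintype n]
    [DecidableEq n] (M : Matrix (α × n) (α × n) R) (a : α) :
    (M.toSquareBlock Prod.fst a).det = (of fun i j => M (a, i) (a, j)).det := by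
  let e : n ≃ {p : α × n // p.1 = a} :=
    { toFun i := ⟨(a, i), rfl⟩
      invFun p := p.1.2
      left_inv _ := rfl
      right_inv := by rintro ⟨⟨b, i⟩, rfl⟩; rfl }
  rw [← det_submatrix_equiv_self e]
  rfl

theorem BlockTriangular.charpoly_eq_prod_fst {α n : Type*} [Fintype α] [LinearOrder α]
    [Fintype n] [DecidableEq n] {M : Matrix (α × n) (α × n) R}
    (h : M.BlockTriangular Prod.fst) :
    M.charpoly = ∏ a, (of fun i j => M (a, i) (a, j)).charpoly := by
  rw [Matrix.charpoly, h.charmatrix.det_fintype]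
  refine Finset.prod_congr rfl fun a _ => ?_
  rw [det_toSquareBlock_fst]
  congr 1
  ext i j
  by_cases hij : i = j <;> simp [charmatrix_apply, hij]

theorem charmatrix_add_single {n : Type*} [Fintype n] [DecidableEq n] (M : Matrix n n R)
    (i j : n) (c : R) :
    charmatrix (M + single i j c) =
      updateRow (charmatrix M) i (charmatrix M i + (-C c) • Pi.single j 1) := by
  ext k l
  by_cases hk : k = i
  · subst hk
    by_cases hl : l = j
    · subst hl; simp [charmatrix_apply]; ring
    · simp [charmatrix_apply, hl, Ne.symm hl]
  · simp [charmatrix_apply, hk, Ne.symm hk]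

theorem charpoly_add_single {n : Type*} [Fintype n] [DecidableEq n] (M : Matrix n n R)
    (i j : n) (c : R) :
    (M + single i j c).charpoly = M.charpoly - C c * adjugate (charmatrix M) j i := by
  rw [Matrix.charpoly, charmatrix_add_single, det_updateRow_add, updateRow_eq_self,
    det_updateRow_smul, adjugate_apply, Matrix.charpoly]
  ring

end Matrix

lemma nilJ_pow_apply (N k : ℕ) (i j : Fin N) :
    (nilJ N ^ k) i j = if (i : ℕ) + k = (j : ℕ) then 1 else 0 := by
  induction k generalizing j with
  | zero => simp [one_apply, Fin.ext_iff]
  | succ k ih =>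
    simp_rw [pow_succ, mul_apply, ih, nilJ, of_apply, mul_ite, mul_one, mul_zero]
    by_cases hk : (i : ℕ) + k < N
    · rw [Fintype.sum_eq_single ⟨(i : ℕ) + k, hk⟩]
      · simp [add_assoc]
      · intro b hb
        simp [Fin.ext_iff] at hb ⊢
        omega
    · have : (i : ℕ) + (k + 1) ≠ j := by omega
      refine (Finset.sum_eq_zero fun b _ => ?_).trans (if_neg this).symm
      have := b.isLt
      split_ifs <;> first | rfl | omega

lemma nilJ_pow_pred (m : ℕ) : nilJ (m + 1) ^ m = single 0 (Fin.last m) 1 := by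
  ext i j
  rw [nilJ_pow_apply, single_apply]
  simp only [Fin.ext_iff, Fin.val_zero, Fin.val_last]
  exact if_congr (by omega) rfl rfl

lemma nilJ_transpose_pow_pred (m : ℕ) : (nilJ (m + 1))ᵀ ^ m = single (Fin.last m) 0 1 := by
  rw [← transpose_pow, nilJ_pow_pred, transpose_single]

lemma nilJ_isUpperTriangular (N : ℕ) : (nilJ N).IsUpperTriangular := by
  intro i j hij
  simp only [nilJ, of_apply, ite_eq_right_iff]
  have : (j : ℕ) < i := hij
  omega

lemma charpoly_nilJ (N : ℕ) : (nilJ N).charpoly = X ^ N := by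
  rw [charpoly_of_isUpperTriangular _ (nilJ_isUpperTriangular N)]
  simp [nilJ]

lemma det_charmatrix_nilJ_submatrix_castSucc_succ (m : ℕ) :
    ((charmatrix (nilJ (m + 1))).submatrix Fin.castSucc Fin.succ).det = (-1) ^ m := by
  rw [det_of_isLowerTriangular]
  · simp [nilJ, Fin.ext_iff]
  · intro i j hij
    have hij : (i : ℕ) < j := hij
    have h₁ : (i : ℕ) ≠ j + 1 := by omega
    simp [nilJ, Fin.ext_iff, h₁, hij.ne]

noncomputable def RN (N : ℕ) (lam : ℂ) : Matrix (Fin N) (Fin N) ℂ :=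
  nilJ N + lam • (nilJ N)ᵀ ^ (N - 1)

lemma RN_succ (m : ℕ) (lam : ℂ) : RN (m + 1) lam = nilJ (m + 1) + single (Fin.last m) 0 lam := by
  rw [RN, Nat.add_sub_cancel, nilJ_transpose_pow_pred, smul_single, smul_eq_mul, mul_one]

lemma charpoly_RN_succ (m : ℕ) (lam : ℂ) : (RN (m + 1) lam).charpoly = X ^ (m + 1) - C lam := by
  rw [RN_succ, charpoly_add_single, charpoly_nilJ, adjugate_fin_succ_eq_det_submatrix,
    Fin.succAbove_last, Fin.succAbove_zero, det_charmatrix_nilJ_submatrix_castSucc_succ]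
  simp [← pow_add]

lemma jordanBlock_isUpperTriangular (ρ : ℕ) (lam : ℂ) : (jordanBlock ρ lam).IsUpperTriangular := by
  intro i j hij
  have hij : (j : ℕ) < i := hij
  have h₁ : (i : ℕ) + 1 ≠ j := by omega
  simp [jordanBlock, Fin.ext_iff, h₁, hij.ne']

lemma RNJ_submatrix_prodComm (N ρ : ℕ) (lam : ℂ) :
    (RNJ N ρ lam).submatrix (Equiv.prodComm (Fin ρ) (Fin N)) (Equiv.prodComm (Fin ρ) (Fin N)) =
      blockForm N ρ lam := by
  simp only [RNJ, blockForm, submatrix_add, Pi.add_apply, Equiv.coe_prodComm,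
    kronecker_submatrix_swap]

lemma blockForm_blockTriangular (N ρ : ℕ) (lam : ℂ) :
    (blockForm N ρ lam).BlockTriangular Prod.fst :=
  (blockTriangular_one.kronecker_left (b := id) _).add
    ((jordanBlock_isUpperTriangular ρ lam).kronecker_left _)

lemma blockForm_diagonal_block (N ρ : ℕ) (lam : ℂ) (a : Fin ρ) :
    (of fun i j => blockForm N ρ lam (a, i) (a, j)) = RN N lam := by
  ext i j
  simp [blockForm, RN, jordanBlock]

theorem RNJ_perm_similar_blockForm_general (N ρ : ℕ) (hN : 1 ≤ N) (lam : ℂ) :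
    (∃ e : (Fin ρ × Fin N) ≃ (Fin N × Fin ρ),
        (RNJ N ρ lam).submatrix ⇑e ⇑e = blockForm N ρ lam) ∧
    (∀ a : Fin ρ,
        (Matrix.of fun i j => blockForm N ρ lam (a, i) (a, j)) =
          nilJ N + lam • ((nilJ N)ᵀ ^ (N - 1))) ∧
    (∀ a b : Fin ρ, b < a → ∀ i j, blockForm N ρ lam (a, i) (b, j) = 0) ∧
    (RNJ N ρ lam).charpoly = (X ^ N - C lam) ^ ρ := by
  have hperm := RNJ_submatrix_prodComm N ρ lam
  have htri := blockForm_blockTriangular N ρ lam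
  refine ⟨⟨_, hperm⟩, blockForm_diagonal_block N ρ lam, fun a b hba i j => htri hba, ?_⟩
  obtain ⟨m, rfl⟩ := Nat.exists_eq_add_one.mpr hN
  rw [← charpoly_reindex (Equiv.prodComm (Fin ρ) (Fin (m + 1))).symm, reindex_apply,
    Equiv.symm_symm, hperm, htri.charpoly_eq_prod_fst]
  simp [blockForm_diagonal_block, charpoly_RN_succ]

/-- `R_N(J_ρ(λ))` is similar via a permutation to `I_ρ ⊗ J_N + J_ρ(λ) ⊗ K_N^{N-1}`,
which is block upper triangular with `ρ` diagonal blocks each equal to `R_N(λ)`;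
consequently the characteristic polynomial of `R_N(J_ρ(λ))` is `(t^N - λ)^ρ`. -/
theorem RNJ_perm_similar_blockForm (N ρ : ℕ) (hN : 1 ≤ N) (hρ : 1 ≤ ρ)
    (lam : ℂ) (hlam : lam ≠ 0) :
    (∃ e : (Fin ρ × Fin N) ≃ (Fin N × Fin ρ),
        (RNJ N ρ lam).submatrix ⇑e ⇑e = blockForm N ρ lam) ∧
    (∀ a : Fin ρ,
        (Matrix.of fun i j => blockForm N ρ lam (a, i) (a, j)) =
          nilJ N + lam • ((nilJ N)ᵀ ^ (N - 1))) ∧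
    (∀ a b : Fin ρ, b < a → ∀ i j, blockForm N ρ lam (a, i) (b, j) = 0) ∧
    (RNJ N ρ lam).charpoly = (X ^ N - C lam) ^ ρ :=
  RNJ_perm_similar_blockForm_general N ρ hN lam
end

section
/- Let λ ∈ ℂ^× and N, ρ ≥ 1. For each N-th root λ_k of λ (k = 0,…,N−1), the eigenspace of R_N(J_ρ(λ)) = J_N ⊗ I_ρ + K_N^{N−1} ⊗ J_ρ(λ) for the eigenvalue λ_k has dimension 1. Consequently, the Jordan canonical form of R_N(J_ρ(λ)) is the direct sum of Jordan blocks J_ρ(λ_0) ⊕ ⋯ ⊕ J_ρ(λ_{N−1}). -/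
open Matrix Kronecker

namespace RNJaux

lemma sum_fin_ite {n : ℕ} (v : ℕ) (f : Fin n → ℂ) :
    (∑ l : Fin n, if v = (l : ℕ) then f l else 0) = if h : v < n then f ⟨v, h⟩ else 0 := by
  split_ifs with h
  · rw [Finset.sum_eq_single (⟨v, h⟩ : Fin n)]
    · simp
    · intro l _ hl
      rw [if_neg]
      intro hv
      exact hl (Fin.ext hv.symm)
    · simp
  · apply Finset.sum_eq_zero
    intro l _
    rw [if_neg]
    intro hv
    exact h (hv ▸ l.isLt)

lemma nilJ_transpose_pow (N m : ℕ) (i j : Fin N) :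
    (((nilJ N)ᵀ) ^ m) i j = if (i : ℕ) = (j : ℕ) + m then 1 else 0 := by
  induction m generalizing j with
  | zero => simp [Matrix.one_apply, Fin.ext_iff]
  | succ m ih =>
      rw [pow_succ, Matrix.mul_apply]
      have h1 : ∀ l : Fin N, (((nilJ N)ᵀ) ^ m) i l * ((nilJ N)ᵀ) l j
          = if (j : ℕ) + 1 = (l : ℕ) then (if (i : ℕ) = (l : ℕ) + m then 1 else 0) else 0 := by
        intro l
        rw [ih, Matrix.transpose_apply]
        show _ * (if (j : ℕ) + 1 = (l : ℕ) then (1:ℂ) else 0) = _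
        split_ifs <;> simp
      rw [Finset.sum_congr rfl fun l _ => h1 l, sum_fin_ite]
      have hi := i.isLt
      by_cases h : (j : ℕ) + 1 < N
      · rw [dif_pos h]
        simp only [Fin.val_mk]
        rw [show (j:ℕ) + 1 + m = (j:ℕ) + (m+1) by omega]
      · rw [dif_neg h, if_neg (by omega)]

lemma jordanBlock_eq (ρ : ℕ) (lam : ℂ) :
    jordanBlock ρ lam = lam • (1 : Matrix (Fin ρ) (Fin ρ) ℂ) + nilJ ρ := by
  ext b c
  show (if b = c then lam else if (b:ℕ)+1 = (c:ℕ) then 1 else 0)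
      = lam * (if b = c then 1 else 0) + (if (b:ℕ)+1 = (c:ℕ) then 1 else 0)
  by_cases h : b = c
  · have : ¬ ((b:ℕ)+1 = (c:ℕ)) := by subst h; omega
    simp [h, this]
  · simp [h]

lemma jordan_mulVec_sum {ρ : ℕ} (lam : ℂ) (y : Fin ρ → ℂ) (b : Fin ρ) :
    (∑ c : Fin ρ, jordanBlock ρ lam b c * y c)
      = lam * y b + (if h : (b:ℕ)+1 < ρ then y ⟨(b:ℕ)+1, h⟩ else 0) := by
  simp only [jordanBlock_eq, Matrix.add_apply, Matrix.smul_apply, smul_eq_mul, add_mul,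
    Finset.sum_add_distrib]
  congr 1
  · have h1 : ∀ c : Fin ρ, lam * (1 : Matrix (Fin ρ) (Fin ρ) ℂ) b c * y c
        = if (b:ℕ) = (c:ℕ) then lam * y c else 0 := by
      intro c
      rw [Matrix.one_apply]
      by_cases h : b = c
      · rw [if_pos h, if_pos (by rw [h])]; ring
      · rw [if_neg h, if_neg (by rw [Fin.ext_iff] at h; exact h)]; ring
    rw [Finset.sum_congr rfl fun c _ => h1 c, sum_fin_ite, dif_pos b.isLt]
  · have h1 : ∀ c : Fin ρ, nilJ ρ b c * y c = if (b:ℕ)+1 = (c:ℕ) then y c else 0 := by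
      intro c
      show (if (b:ℕ)+1 = (c:ℕ) then (1:ℂ) else 0) * y c = _
      split_ifs <;> simp
    rw [Finset.sum_congr rfl fun c _ => h1 c, sum_fin_ite]

lemma RNJ_mulVec {N ρ : ℕ} (hN : 0 < N) (lam : ℂ) (x : Fin N × Fin ρ → ℂ) (i : Fin N) (b : Fin ρ) :
    (RNJ N ρ lam *ᵥ x) (i, b) =
      (if h : (i:ℕ)+1 < N then x (⟨(i:ℕ)+1, h⟩, b) else 0)
      + (if (i:ℕ) = N - 1 then
          lam * x (⟨0, hN⟩, b) + (if h : (b:ℕ)+1 < ρ then x (⟨0, hN⟩, ⟨(b:ℕ)+1, h⟩) else 0)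
         else 0) := by
  rw [RNJ, Matrix.add_mulVec, Pi.add_apply]
  congr 1
  · show (∑ q : Fin N × Fin ρ, (nilJ N ⊗ₖ (1 : Matrix (Fin ρ) (Fin ρ) ℂ)) (i,b) q * x q) = _
    rw [Fintype.sum_prod_type]
    have h1 : ∀ j : Fin N, (∑ c : Fin ρ,
        (nilJ N ⊗ₖ (1 : Matrix (Fin ρ) (Fin ρ) ℂ)) (i,b) (j,c) * x (j,c))
        = if (i:ℕ)+1 = (j:ℕ) then x (j, b) else 0 := by
      intro j
      have h2 : ∀ c : Fin ρ, (nilJ N ⊗ₖ (1 : Matrix (Fin ρ) (Fin ρ) ℂ)) (i,b) (j,c) * x (j,c)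
          = if (b:ℕ) = (c:ℕ) then (if (i:ℕ)+1 = (j:ℕ) then x (j,c) else 0) else 0 := by
        intro c
        rw [Matrix.kroneckerMap_apply, Matrix.one_apply]
        show (if (i:ℕ)+1 = (j:ℕ) then (1:ℂ) else 0) * (if b = c then (1:ℂ) else 0) * x (j,c) = _
        by_cases hbc : (b:ℕ) = (c:ℕ)
        · rw [if_pos hbc, if_pos (Fin.ext hbc)]
          split_ifs <;> ring
        · rw [if_neg hbc, if_neg (fun hb => hbc (congrArg Fin.val hb))]
          ring
      rw [Finset.sum_congr rfl fun c _ => h2 c, sum_fin_ite, dif_pos b.isLt]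
    rw [Finset.sum_congr rfl fun j _ => h1 j, sum_fin_ite]
  · show (∑ q : Fin N × Fin ρ, (((nilJ N)ᵀ ^ (N-1)) ⊗ₖ jordanBlock ρ lam) (i,b) q * x q) = _
    rw [Fintype.sum_prod_type]
    have h1 : ∀ j : Fin N, (∑ c : Fin ρ,
        (((nilJ N)ᵀ ^ (N-1)) ⊗ₖ jordanBlock ρ lam) (i,b) (j,c) * x (j,c))
        = if (i:ℕ) = (j:ℕ) + (N-1) then
            (lam * x (j, b) + (if h : (b:ℕ)+1 < ρ then x (j, ⟨(b:ℕ)+1, h⟩) else 0)) else 0 := by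
      intro j
      have h2 : ∀ c : Fin ρ, (((nilJ N)ᵀ ^ (N-1)) ⊗ₖ jordanBlock ρ lam) (i,b) (j,c) * x (j,c)
          = if (i:ℕ) = (j:ℕ) + (N-1) then jordanBlock ρ lam b c * x (j,c) else 0 := by
        intro c
        rw [Matrix.kroneckerMap_apply, nilJ_transpose_pow]
        split_ifs <;> ring
      rw [Finset.sum_congr rfl fun c _ => h2 c]
      by_cases h : (i:ℕ) = (j:ℕ) + (N-1)
      · simp only [if_pos h]
        exact jordan_mulVec_sum lam (fun c => x (j,c)) b
      · simp only [if_neg h]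
        exact Finset.sum_eq_zero fun c _ => rfl
    rw [Finset.sum_congr rfl fun j _ => h1 j]
    have hi := i.isLt
    by_cases h : (i:ℕ) = N - 1
    · rw [if_pos h, Finset.sum_eq_single (⟨0, hN⟩ : Fin N)]
      · rw [if_pos (by simp only [Fin.val_mk]; omega)]
      · intro j _ hj
        rw [if_neg]
        intro hij
        have hj' := j.isLt
        exact hj (Fin.ext (by simp only [Fin.val_mk]; omega))
      · simp
    · rw [if_neg h]
      apply Finset.sum_eq_zero
      intro j _
      rw [if_neg]
      have hj := j.isLt
      omega

lemma eigen_part {N ρ : ℕ} (hN : 0 < N) (hρ : 0 < ρ) (lam : ℂ) (μ : ℂ) (hμ : μ ^ N = lam) :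
    Module.finrank ℂ ↥(Module.End.eigenspace (Matrix.mulVecLin (RNJ N ρ lam)) μ) = 1 := by
  set v : Fin N × Fin ρ → ℂ := fun p => μ ^ (p.1 : ℕ) * (if (p.2 : ℕ) = 0 then 1 else 0) with hv
  have hv0 : v ≠ 0 := by
    intro h
    have := congr_fun h (⟨0, hN⟩, ⟨0, hρ⟩)
    simp [hv] at this
  have hspan : Module.End.eigenspace (Matrix.mulVecLin (RNJ N ρ lam)) μ
      = Submodule.span ℂ {v} := by
    apply le_antisymm
    · intro x hx
      rw [Module.End.mem_eigenspace_iff, Matrix.mulVecLin_apply] at hx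
      have heq : ∀ (i : Fin N) (b : Fin ρ),
          (if h : (i:ℕ)+1 < N then x (⟨(i:ℕ)+1, h⟩, b) else 0)
          + (if (i:ℕ) = N - 1 then
              lam * x (⟨0, hN⟩, b) + (if h : (b:ℕ)+1 < ρ then x (⟨0, hN⟩, ⟨(b:ℕ)+1, h⟩) else 0)
             else 0) = μ * x (i, b) := by
        intro i b
        rw [← RNJ_mulVec hN lam x i b, hx]
        rfl
      have hA : ∀ (n : ℕ) (h : n < N) (b : Fin ρ),
          x (⟨n, h⟩, b) = μ ^ n * x (⟨0, hN⟩, b) := by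
        intro n
        induction n with
        | zero => intro h b; simp
        | succ n ih =>
            intro h b
            have hn : n < N := by omega
            have heqn := heq ⟨n, hn⟩ b
            rw [dif_pos (by simp only [Fin.val_mk]; omega : ((⟨n, hn⟩ : Fin N) : ℕ) + 1 < N),
              if_neg (by simp only [Fin.val_mk]; omega)] at heqn
            simp only [Fin.val_mk, add_zero] at heqn
            rw [show (⟨n+1, h⟩ : Fin N) = ⟨n+1, by omega⟩ from rfl]
            rw [heqn, ih hn b, pow_succ]
            ring
      have hB : ∀ (m : ℕ) (h : m + 1 < ρ), x (⟨0, hN⟩, ⟨m+1, h⟩) = 0 := by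
        intro m h
        have hm : m < ρ := by omega
        have heqm := heq ⟨N-1, by omega⟩ ⟨m, hm⟩
        rw [dif_neg (by simp only [Fin.val_mk]; omega),
          if_pos (by simp only [Fin.val_mk])] at heqm
        simp only [Fin.val_mk, zero_add, dif_pos h] at heqm
        rw [hA (N-1) (by omega) ⟨m, hm⟩] at heqm
        have hpow : μ * μ ^ (N-1) = lam := by
          rw [← hμ]
          conv_rhs => rw [show N = (N-1)+1 from by omega]
          rw [pow_succ']
        linear_combination heqm + x (⟨0, hN⟩, ⟨m, hm⟩) * hpow
      apply Submodule.mem_span_singleton.mpr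
      refine ⟨x (⟨0, hN⟩, ⟨0, hρ⟩), ?_⟩
      funext p
      obtain ⟨i, b⟩ := p
      simp only [Pi.smul_apply, smul_eq_mul, hv]
      have hxi := hA (i:ℕ) i.isLt b
      rw [Fin.eta] at hxi
      rw [hxi]
      by_cases hb : (b:ℕ) = 0
      · rw [if_pos hb, show b = (⟨0, hρ⟩ : Fin ρ) from Fin.ext hb]
        ring
      · rw [if_neg hb]
        obtain ⟨m, hm⟩ : ∃ m, (b:ℕ) = m + 1 := ⟨(b:ℕ)-1, by omega⟩
        rw [show b = (⟨m+1, hm ▸ b.isLt⟩ : Fin ρ) from Fin.ext hm, hB m (hm ▸ b.isLt)]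
        ring
    · rw [Submodule.span_singleton_le_iff_mem, Module.End.mem_eigenspace_iff,
        Matrix.mulVecLin_apply]
      funext p
      obtain ⟨i, b⟩ := p
      rw [RNJ_mulVec hN lam v i b]
      have hi := i.isLt
      simp only [Pi.smul_apply, smul_eq_mul, hv, Fin.val_mk]
      by_cases h : (i:ℕ) + 1 < N
      · rw [dif_pos h, if_neg (show ¬((i:ℕ) = N - 1) from by omega)]
        rw [pow_succ]
        ring
      · rw [dif_neg h, if_pos (show (i:ℕ) = N - 1 from by omega)]
        have hpow : μ * μ ^ (i:ℕ) = lam := by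
          rw [← hμ]
          conv_rhs => rw [show N = (i:ℕ)+1 from by omega]
          rw [pow_succ']
        split_ifs <;>
          first
            | (exfalso; assumption)
            | (exfalso; omega)
            | linear_combination -hpow
            | linear_combination hpow
            | ring
  rw [hspan]
  exact finrank_span_singleton hv0

/-! ### Part 2: similarity to the Jordan form -/

noncomputable def G (Nn : ℕ) (lam μc : ℂ) (i b : ℕ) : Polynomial ℂ :=
  (Polynomial.X + Polynomial.C μc) ^ i
    * ((Polynomial.X + Polynomial.C μc) ^ Nn - Polynomial.C lam) ^ b

noncomputable def Qmat (N ρ : ℕ) (lam : ℂ) (μ : Fin N → ℂ) :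
    Matrix (Fin N × Fin ρ) (Fin N × Fin ρ) ℂ :=
  Matrix.of fun p q => (G N lam (μ q.1) (p.1 : ℕ) (p.2 : ℕ)).coeff (q.2 : ℕ)

noncomputable def Tmat (N ρ : ℕ) (μ : Fin N → ℂ) :
    Matrix (Fin N × Fin ρ) (Fin N × Fin ρ) ℂ :=
  Matrix.of fun p q => if p.1 = q.1 then jordanBlock ρ (μ p.1) p.2 q.2 else 0

noncomputable def Umat (N ρ : ℕ) (lam : ℂ) :
    Matrix (Fin N × Fin ρ) (Fin N × Fin ρ) ℂ :=
  Matrix.of fun p q => if (p.1 : ℕ) = (q.1 : ℕ) ∧ (q.2 : ℕ) ≤ (p.2 : ℕ)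
    then (((p.2 : ℕ).choose (q.2 : ℕ) : ℂ) * (-lam) ^ ((p.2 : ℕ) - (q.2 : ℕ))) else 0

noncomputable def Wmat (N ρ : ℕ) (μ : Fin N → ℂ) :
    Matrix (Fin N × Fin ρ) (Fin N × Fin ρ) ℂ :=
  Matrix.of fun p q =>
    ((Polynomial.X + Polynomial.C (μ q.1)) ^ ((p.1 : ℕ) + N * (p.2 : ℕ))).coeff (q.2 : ℕ)

lemma jordan_vecMul_sum {ρ : ℕ} (lam : ℂ) (g : Polynomial ℂ) (a : Fin ρ) :
    (∑ c : Fin ρ, g.coeff (c : ℕ) * jordanBlock ρ lam c a)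
      = ((Polynomial.X + Polynomial.C lam) * g).coeff (a : ℕ) := by
  rw [add_mul, Polynomial.coeff_add, Polynomial.coeff_C_mul]
  conv_rhs => rw [add_comm]
  simp only [jordanBlock_eq, Matrix.add_apply, Matrix.smul_apply, smul_eq_mul, mul_add,
    Finset.sum_add_distrib]
  congr 1
  · have h1 : ∀ c : Fin ρ, g.coeff (c : ℕ) * (lam * (1 : Matrix (Fin ρ) (Fin ρ) ℂ) c a)
        = if (c : ℕ) = (a : ℕ) then lam * g.coeff (c : ℕ) else 0 := by
      intro c
      rw [Matrix.one_apply]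
      by_cases h : c = a
      · rw [if_pos h, if_pos (congrArg Fin.val h)]; ring
      · rw [if_neg h, if_neg (fun hb => h (Fin.ext hb))]; ring
    have h2 : ∀ c : Fin ρ, (if (c : ℕ) = (a : ℕ) then lam * g.coeff (c : ℕ) else 0)
        = if (a : ℕ) = (c : ℕ) then lam * g.coeff (c : ℕ) else 0 := by
      intro c
      by_cases h : (c : ℕ) = (a : ℕ)
      · rw [if_pos h, if_pos h.symm]
      · rw [if_neg h, if_neg (fun hb => h hb.symm)]
    rw [Finset.sum_congr rfl fun c _ => (h1 c).trans (h2 c), sum_fin_ite, dif_pos a.isLt,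
      Fin.eta]
  · have ha := a.isLt
    rcases hav : (a : ℕ) with _ | d
    · rw [Polynomial.mul_coeff_zero, Polynomial.coeff_X_zero, zero_mul]
      apply Finset.sum_eq_zero
      intro c _
      show g.coeff (c : ℕ) * (if (c : ℕ) + 1 = (a : ℕ) then (1:ℂ) else 0) = 0
      rw [hav, if_neg (by omega), mul_zero]
    · rw [Polynomial.coeff_X_mul]
      have h3 : ∀ c : Fin ρ, g.coeff (c : ℕ) * nilJ ρ c a
          = if d = (c : ℕ) then g.coeff (c : ℕ) else 0 := by
        intro c
        show g.coeff (c : ℕ) * (if (c : ℕ) + 1 = (a : ℕ) then (1:ℂ) else 0) = _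
        rw [hav]
        by_cases h : d = (c : ℕ)
        · rw [if_pos (by omega), if_pos h, mul_one]
        · rw [if_neg (by omega), if_neg h, mul_zero]
      rw [Finset.sum_congr rfl fun c _ => h3 c, sum_fin_ite, dif_pos (by omega : d < ρ)]

lemma G_succ (Nn : ℕ) (lam μc : ℂ) (i b : ℕ) :
    G Nn lam μc (i + 1) b = (Polynomial.X + Polynomial.C μc) * G Nn lam μc i b := by
  rw [G, G, pow_succ]
  ring

lemma G_shift {Nn : ℕ} (hN : 0 < Nn) (lam μc : ℂ) (b : ℕ) :
    (Polynomial.X + Polynomial.C μc) * G Nn lam μc (Nn - 1) b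
      = G Nn lam μc 0 (b + 1) + Polynomial.C lam * G Nn lam μc 0 b := by
  obtain ⟨m, rfl⟩ : ∃ m, Nn = m + 1 := ⟨Nn - 1, by omega⟩
  simp only [G, Nat.add_sub_cancel, pow_zero, one_mul]
  calc (Polynomial.X + Polynomial.C μc) * ((Polynomial.X + Polynomial.C μc) ^ m
          * ((Polynomial.X + Polynomial.C μc) ^ (m + 1) - Polynomial.C lam) ^ b)
      = (((Polynomial.X + Polynomial.C μc) ^ (m + 1) - Polynomial.C lam) + Polynomial.C lam)
          * ((Polynomial.X + Polynomial.C μc) ^ (m + 1) - Polynomial.C lam) ^ b := by ring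
    _ = _ := by ring

lemma G_top_coeff {Nn : ℕ} (ρ : ℕ) (lam μc : ℂ) (hμc : μc ^ Nn = lam) (a : ℕ) (ha : a < ρ) :
    (G Nn lam μc 0 ρ).coeff a = 0 := by
  have hXdvd : Polynomial.X ∣ ((Polynomial.X + Polynomial.C μc) ^ Nn - Polynomial.C lam) := by
    rw [Polynomial.X_dvd_iff, Polynomial.coeff_zero_eq_eval_zero]
    simp [hμc]
  have h2 := pow_dvd_pow_of_dvd hXdvd ρ
  rw [G, pow_zero, one_mul]
  exact Polynomial.X_pow_dvd_iff.mp h2 a ha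

lemma RQ_eq_QT {N ρ : ℕ} (hN : 0 < N) (lam : ℂ) (μ : Fin N → ℂ) (hμ : ∀ k, μ k ^ N = lam) :
    RNJ N ρ lam * Qmat N ρ lam μ = Qmat N ρ lam μ * Tmat N ρ μ := by
  ext ⟨i, b⟩ ⟨k, a⟩
  have hL : (RNJ N ρ lam * Qmat N ρ lam μ) (i, b) (k, a)
      = (RNJ N ρ lam *ᵥ fun l => Qmat N ρ lam μ l (k, a)) (i, b) := rfl
  have hR : (Qmat N ρ lam μ * Tmat N ρ μ) (i, b) (k, a)
      = ((Polynomial.X + Polynomial.C (μ k)) * G N lam (μ k) (i : ℕ) (b : ℕ)).coeff (a : ℕ) := by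
    rw [Matrix.mul_apply, Fintype.sum_prod_type]
    have h1 : ∀ j : Fin N, (∑ c : Fin ρ, Qmat N ρ lam μ (i, b) (j, c) * Tmat N ρ μ (j, c) (k, a))
        = if j = k
          then ((Polynomial.X + Polynomial.C (μ j)) * G N lam (μ j) (i:ℕ) (b:ℕ)).coeff (a:ℕ)
          else 0 := by
      intro j
      by_cases hjk : j = k
      · rw [if_pos hjk]
        have h2 : ∀ c : Fin ρ, Qmat N ρ lam μ (i, b) (j, c) * Tmat N ρ μ (j, c) (k, a)
            = (G N lam (μ j) (i:ℕ) (b:ℕ)).coeff (c:ℕ) * jordanBlock ρ (μ j) c a := by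
          intro c
          show (G N lam (μ j) (i:ℕ) (b:ℕ)).coeff (c:ℕ)
              * (if j = k then jordanBlock ρ (μ j) c a else 0) = _
          rw [if_pos hjk]
        rw [Finset.sum_congr rfl fun c _ => h2 c]
        exact jordan_vecMul_sum (μ j) (G N lam (μ j) (i:ℕ) (b:ℕ)) a
      · rw [if_neg hjk]
        apply Finset.sum_eq_zero
        intro c _
        show (G N lam (μ j) (i:ℕ) (b:ℕ)).coeff (c:ℕ)
            * (if j = k then jordanBlock ρ (μ j) c a else 0) = 0
        rw [if_neg hjk, mul_zero]
    rw [Finset.sum_congr rfl fun j _ => h1 j, Finset.sum_ite_eq' Finset.univ k]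
    rw [if_pos (Finset.mem_univ k)]
  rw [hL, hR, RNJ_mulVec hN]
  have hi := i.isLt
  by_cases h : (i : ℕ) + 1 < N
  · rw [dif_pos h, if_neg (show ¬((i:ℕ) = N - 1) from by omega), add_zero]
    show (G N lam (μ k) ((i:ℕ)+1) (b:ℕ)).coeff (a:ℕ) = _
    rw [G_succ]
  · rw [dif_neg h, if_pos (show (i:ℕ) = N - 1 from by omega), zero_add]
    have hNi : (i : ℕ) = N - 1 := by omega
    rw [hNi, G_shift hN, Polynomial.coeff_add, Polynomial.coeff_C_mul]
    by_cases hb : (b : ℕ) + 1 < ρ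
    · rw [dif_pos hb]
      show lam * (G N lam (μ k) 0 (b:ℕ)).coeff (a:ℕ)
          + (G N lam (μ k) 0 ((b:ℕ)+1)).coeff (a:ℕ) = _
      ring
    · rw [dif_neg hb, add_zero]
      have hbρ : (b : ℕ) + 1 = ρ := by have := b.isLt; omega
      have hz : (G N lam (μ k) 0 ((b:ℕ)+1)).coeff (a:ℕ) = 0 := by
        rw [hbρ]
        exact G_top_coeff ρ lam (μ k) (hμ k) (a:ℕ) a.isLt
      rw [hz, zero_add]
      rfl

lemma G_expand (Nn : ℕ) (lam μc : ℂ) (i b : ℕ) :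
    G Nn lam μc i b = ∑ c ∈ Finset.range (b + 1),
      Polynomial.C ((b.choose c : ℂ) * (-lam) ^ (b - c))
        * (Polynomial.X + Polynomial.C μc) ^ (i + Nn * c) := by
  rw [G, sub_eq_add_neg, add_pow ((Polynomial.X + Polynomial.C μc) ^ Nn) (-(Polynomial.C lam)) b,
    Finset.mul_sum]
  apply Finset.sum_congr rfl
  intro c _
  have h1 : (-(Polynomial.C lam)) ^ (b - c) = Polynomial.C ((-lam) ^ (b - c)) := by
    rw [← Polynomial.C_neg, ← Polynomial.C_pow]
  have h2 : (((Polynomial.X + Polynomial.C μc) ^ Nn) ^ c)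
      = (Polynomial.X + Polynomial.C μc) ^ (Nn * c) := by rw [← pow_mul]
  have h3 : ((b.choose c : ℕ) : Polynomial ℂ) = Polynomial.C ((b.choose c : ℂ)) := by
    simp
  rw [h1, h2, h3, Polynomial.C_mul, pow_add]
  ring

lemma sum_range_to_fin {ρ : ℕ} (b : Fin ρ) (f : ℕ → ℂ) :
    (∑ c ∈ Finset.range ((b : ℕ) + 1), f c)
      = ∑ c : Fin ρ, if (c : ℕ) ≤ (b : ℕ) then f (c : ℕ) else 0 := by
  rw [Fin.sum_univ_eq_sum_range (fun c => if c ≤ (b : ℕ) then f c else 0) ρ]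
  rw [← Finset.sum_subset (Finset.range_subset_range.mpr (by have := b.isLt; omega : (b:ℕ)+1 ≤ ρ))]
  · apply Finset.sum_congr rfl
    intro c hc
    rw [if_pos (by simp at hc; omega)]
  · intro c _ hc
    rw [if_neg (by simp at hc; omega)]

lemma Q_eq_UW {N ρ : ℕ} (lam : ℂ) (μ : Fin N → ℂ) :
    Qmat N ρ lam μ = Umat N ρ lam * Wmat N ρ μ := by
  ext ⟨i, b⟩ ⟨k, a⟩
  rw [Matrix.mul_apply, Fintype.sum_prod_type]
  rw [Finset.sum_eq_single i]
  · have h2 : ∀ c : Fin ρ, Umat N ρ lam (i, b) (i, c) * Wmat N ρ μ (i, c) (k, a)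
        = if (c : ℕ) ≤ (b : ℕ) then
            ((b : ℕ).choose (c : ℕ) : ℂ) * (-lam) ^ ((b : ℕ) - (c : ℕ))
              * ((Polynomial.X + Polynomial.C (μ k)) ^ ((i:ℕ) + N * (c:ℕ))).coeff (a:ℕ)
          else 0 := by
      intro c
      show (if (i:ℕ) = (i:ℕ) ∧ (c:ℕ) ≤ (b:ℕ) then _ else 0) * _ = _
      by_cases h : (c : ℕ) ≤ (b : ℕ)
      · rw [if_pos ⟨rfl, h⟩, if_pos h]
        rfl
      · rw [if_neg (fun hx => h hx.2), if_neg h, zero_mul]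
    rw [Finset.sum_congr rfl fun c _ => h2 c]
    show (G N lam (μ k) (i:ℕ) (b:ℕ)).coeff (a:ℕ) = _
    rw [G_expand, Polynomial.finset_sum_coeff]
    have h4 : ∀ c ∈ Finset.range ((b:ℕ)+1),
        (Polynomial.C (((b:ℕ).choose c : ℂ) * (-lam) ^ ((b:ℕ) - c))
          * (Polynomial.X + Polynomial.C (μ k)) ^ ((i:ℕ) + N * c)).coeff (a:ℕ)
        = ((b:ℕ).choose c : ℂ) * (-lam) ^ ((b:ℕ) - c)
            * ((Polynomial.X + Polynomial.C (μ k)) ^ ((i:ℕ) + N * c)).coeff (a:ℕ) := by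
      intro c _
      rw [Polynomial.coeff_C_mul]
    rw [Finset.sum_congr rfl h4]
    exact sum_range_to_fin b _
  · intro j _ hj
    apply Finset.sum_eq_zero
    intro c _
    show (if (i:ℕ) = (j:ℕ) ∧ (c:ℕ) ≤ (b:ℕ) then _ else 0) * _ = 0
    rw [if_neg (fun hx => hj (Fin.ext hx.1.symm)), zero_mul]
  · intro h
    exact absurd (Finset.mem_univ i) h

lemma isUnit_Umat {N ρ : ℕ} (lam : ℂ) : IsUnit (Umat N ρ lam) := by
  rw [← Matrix.vecMul_injective_iff_isUnit]
  have hker : ∀ v : Fin N × Fin ρ → ℂ, Matrix.vecMul v (Umat N ρ lam) = 0 → v = 0 := by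
    intro v hv
    have hE : ∀ (j : Fin N) (c : Fin ρ),
        (∑ b' : Fin ρ, v (j, b') * Umat N ρ lam (j, b') (j, c)) = 0 := by
      intro j c
      have h0 : Matrix.vecMul v (Umat N ρ lam) (j, c) = 0 := by rw [hv]; rfl
      have h1 : Matrix.vecMul v (Umat N ρ lam) (j, c)
          = ∑ p : Fin N × Fin ρ, v p * Umat N ρ lam p (j, c) := rfl
      rw [h1, Fintype.sum_prod_type, Finset.sum_eq_single j] at h0
      · exact h0
      · intro j' _ hj'
        apply Finset.sum_eq_zero
        intro b' _
        show v (j', b') * (if (j':ℕ) = (j:ℕ) ∧ _ then _ else 0) = 0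
        rw [if_neg (fun hx => hj' (Fin.ext hx.1)), mul_zero]
      · intro h
        exact absurd (Finset.mem_univ j) h
    have key : ∀ (m : ℕ) (j : Fin N) (b : Fin ρ), ρ ≤ (b : ℕ) + m + 1 → v (j, b) = 0 := by
      intro m
      induction m with
      | zero =>
          intro j b hb
          have hEb := hE j b
          rw [Finset.sum_eq_single b] at hEb
          · show v (j, b) = 0
            rw [show Umat N ρ lam (j, b) (j, b)
                = (((b:ℕ).choose (b:ℕ) : ℂ) * (-lam) ^ ((b:ℕ) - (b:ℕ)))
                from if_pos ⟨rfl, le_rfl⟩] at hEb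
            simpa using hEb
          · intro b' _ hb'
            show v (j, b') * (if (j:ℕ) = (j:ℕ) ∧ (b:ℕ) ≤ (b':ℕ) then _ else 0) = 0
            rw [if_neg, mul_zero]
            rintro ⟨-, h2⟩
            have := b'.isLt
            exact hb' (Fin.ext (by omega))
          · intro h
            exact absurd (Finset.mem_univ b) h
      | succ m ih =>
          intro j b hb
          have hEb := hE j b
          rw [Finset.sum_eq_single b] at hEb
          · show v (j, b) = 0
            rw [show Umat N ρ lam (j, b) (j, b)
                = (((b:ℕ).choose (b:ℕ) : ℂ) * (-lam) ^ ((b:ℕ) - (b:ℕ)))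
                from if_pos ⟨rfl, le_rfl⟩] at hEb
            simpa using hEb
          · intro b' _ hb'
            by_cases hle : (b : ℕ) ≤ (b' : ℕ)
            · have hlt : (b : ℕ) < (b' : ℕ) := by
                rcases lt_or_eq_of_le hle with h | h
                · exact h
                · exact absurd (Fin.ext h).symm hb'
              rw [ih j b' (by omega), zero_mul]
            · show v (j, b') * (if (j:ℕ) = (j:ℕ) ∧ (b:ℕ) ≤ (b':ℕ) then _ else 0) = 0
              rw [if_neg (fun hx => hle hx.2), mul_zero]
          · intro h
            exact absurd (Finset.mem_univ b) h
    funext p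
    obtain ⟨j, b⟩ := p
    exact key ρ j b (by have := b.isLt; omega)
  intro v v' h
  have h' : v ᵥ* Umat N ρ lam = v' ᵥ* Umat N ρ lam := h
  have := hker (v - v') (by rw [Matrix.sub_vecMul, h', sub_self])
  exact sub_eq_zero.mp this

lemma encode_inj {N : ℕ} {j j' c c' : ℕ} (hj : j < N) (hj' : j' < N)
    (h : j + N * c = j' + N * c') : j = j' ∧ c = c' := by
  have h1 : (j + N * c) % N = j := by rw [Nat.add_mul_mod_self_left, Nat.mod_eq_of_lt hj]
  have h2 : (j' + N * c') % N = j' := by rw [Nat.add_mul_mod_self_left, Nat.mod_eq_of_lt hj']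
  have hjj : j = j' := by rw [← h1, ← h2, h]
  refine ⟨hjj, ?_⟩
  have h3 : N * c = N * c' := by omega
  exact Nat.eq_of_mul_eq_mul_left (by omega) h3

lemma isUnit_Wmat {N ρ : ℕ} (hN : 0 < N) (μ : Fin N → ℂ) (hinj : Function.Injective μ) :
    IsUnit (Wmat N ρ μ) := by
  rw [← Matrix.vecMul_injective_iff_isUnit]
  have hker : ∀ v : Fin N × Fin ρ → ℂ, Matrix.vecMul v (Wmat N ρ μ) = 0 → v = 0 := by
    intro v hv
    set Pp : Polynomial ℂ := ∑ p : Fin N × Fin ρ,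
      Polynomial.C (v p) * Polynomial.X ^ ((p.1 : ℕ) + N * (p.2 : ℕ)) with hPp
    have hcoeffP : ∀ (j : Fin N) (c : Fin ρ), Pp.coeff ((j:ℕ) + N * (c:ℕ)) = v (j, c) := by
      intro j c
      rw [hPp, Polynomial.finset_sum_coeff, Finset.sum_eq_single (j, c)]
      · rw [Polynomial.coeff_C_mul, Polynomial.coeff_X_pow, if_pos rfl, mul_one]
      · intro q _ hq
        rw [Polynomial.coeff_C_mul, Polynomial.coeff_X_pow, if_neg, mul_zero]
        intro hx
        obtain ⟨h1, h2⟩ := encode_inj j.isLt q.1.isLt hx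
        apply hq
        rw [Prod.ext_iff]
        exact ⟨Fin.ext h1.symm, Fin.ext h2.symm⟩
      · intro h
        exact absurd (Finset.mem_univ (j, c)) h
    have htaylor : ∀ (k : Fin N) (a : ℕ), (Polynomial.taylor (μ k) Pp).coeff a
        = ∑ p : Fin N × Fin ρ,
            v p * ((Polynomial.X + Polynomial.C (μ k)) ^ ((p.1:ℕ) + N * (p.2:ℕ))).coeff a := by
      intro k a
      rw [hPp, map_sum, Polynomial.finset_sum_coeff]
      apply Finset.sum_congr rfl
      intro p _
      rw [Polynomial.taylor_apply, Polynomial.mul_comp, Polynomial.C_comp,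
        Polynomial.X_pow_comp, Polynomial.coeff_C_mul]
    have hc : ∀ (k : Fin N) (a : Fin ρ), (Polynomial.taylor (μ k) Pp).coeff (a : ℕ) = 0 := by
      intro k a
      rw [htaylor]
      have h0 : Matrix.vecMul v (Wmat N ρ μ) (k, a) = 0 := by rw [hv]; rfl
      have h1 : Matrix.vecMul v (Wmat N ρ μ) (k, a)
          = ∑ p : Fin N × Fin ρ, v p * Wmat N ρ μ p (k, a) := rfl
      rw [h1] at h0
      exact h0
    have hdvd : ∀ k : Fin N, ((Polynomial.X : Polynomial ℂ) - Polynomial.C (μ k)) ^ ρ ∣ Pp := by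
      intro k
      have hX : (Polynomial.X : Polynomial ℂ) ^ ρ ∣ Polynomial.taylor (μ k) Pp := by
        rw [Polynomial.X_pow_dvd_iff]
        intro d hd
        exact hc k ⟨d, hd⟩
      obtain ⟨S, hS⟩ := hX
      refine ⟨S.comp (Polynomial.X - Polynomial.C (μ k)), ?_⟩
      have h1 := Polynomial.taylor_taylor Pp (-(μ k)) (μ k)
      rw [neg_add_cancel, Polynomial.taylor_zero] at h1
      rw [← h1, hS, Polynomial.taylor_apply, Polynomial.mul_comp, Polynomial.X_pow_comp,
        Polynomial.C_neg, ← sub_eq_add_neg]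
    have hprodvd : (∏ k : Fin N, ((Polynomial.X : Polynomial ℂ) - Polynomial.C (μ k)) ^ ρ) ∣ Pp := by
      apply Finset.prod_dvd_of_coprime
      · intro k _ k' _ hkk'
        exact ((Polynomial.pairwise_coprime_X_sub_C hinj) hkk').pow
      · intro k _
        exact hdvd k
    have hdegP : Pp.degree < ((N * ρ : ℕ) : WithBot ℕ) := by
      rw [hPp]
      apply lt_of_le_of_lt (Polynomial.degree_sum_le _ _)
      rw [Finset.sup_lt_iff (WithBot.bot_lt_coe _)]
      intro p _
      have hlt : (p.1 : ℕ) + N * (p.2 : ℕ) < N * ρ := by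
        have h1 := p.1.isLt
        have h2 := p.2.isLt
        calc (p.1 : ℕ) + N * (p.2 : ℕ) < N + N * (p.2 : ℕ) := by omega
          _ = N * ((p.2 : ℕ) + 1) := by ring
          _ ≤ N * ρ := Nat.mul_le_mul_left N (by omega)
      calc (Polynomial.C (v p) * Polynomial.X ^ ((p.1:ℕ) + N * (p.2:ℕ))).degree
          ≤ (Polynomial.C (v p)).degree
              + ((Polynomial.X : Polynomial ℂ) ^ ((p.1:ℕ) + N * (p.2:ℕ))).degree :=
            Polynomial.degree_mul_le _ _
        _ ≤ 0 + (((p.1:ℕ) + N * (p.2:ℕ) : ℕ) : WithBot ℕ) :=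
            add_le_add Polynomial.degree_C_le (le_of_eq (Polynomial.degree_X_pow _))
        _ = (((p.1:ℕ) + N * (p.2:ℕ) : ℕ) : WithBot ℕ) := zero_add _
        _ < ((N * ρ : ℕ) : WithBot ℕ) := by exact_mod_cast hlt
    have hdegprod :
        (∏ k : Fin N, ((Polynomial.X : Polynomial ℂ) - Polynomial.C (μ k)) ^ ρ).degree
          = ((N * ρ : ℕ) : WithBot ℕ) := by
      have hmonic : (∏ k : Fin N,
          ((Polynomial.X : Polynomial ℂ) - Polynomial.C (μ k)) ^ ρ).Monic :=
        Polynomial.monic_prod_of_monic _ _ fun k _ => (Polynomial.monic_X_sub_C (μ k)).pow ρ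
      rw [Polynomial.degree_eq_natDegree hmonic.ne_zero]
      congr 1
      rw [Polynomial.natDegree_prod]
      · have : ∀ k : Fin N,
            (((Polynomial.X : Polynomial ℂ) - Polynomial.C (μ k)) ^ ρ).natDegree = ρ := by
          intro k
          rw [Polynomial.natDegree_pow, Polynomial.natDegree_X_sub_C, mul_one]
        rw [Finset.sum_congr rfl fun k _ => this k, Finset.sum_const, Finset.card_univ,
          Fintype.card_fin, smul_eq_mul]
      · intro k _
        exact ((Polynomial.monic_X_sub_C (μ k)).pow ρ).ne_zero
    have hP0 : Pp = 0 := Polynomial.eq_zero_of_dvd_of_degree_lt hprodvd (hdegprod ▸ hdegP)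
    funext p
    obtain ⟨j, c⟩ := p
    rw [← hcoeffP j c, hP0, Polynomial.coeff_zero]
    rfl
  intro v v' h
  have h' : v ᵥ* Wmat N ρ μ = v' ᵥ* Wmat N ρ μ := h
  have := hker (v - v') (by rw [Matrix.sub_vecMul, h', sub_self])
  exact sub_eq_zero.mp this

lemma Tmat_eq {N ρ : ℕ} (μ : Fin N → ℂ) :
    Tmat N ρ μ = (Matrix.blockDiagonal fun k : Fin N => jordanBlock ρ (μ k)).submatrix
      ⇑(Equiv.prodComm (Fin N) (Fin ρ)) ⇑(Equiv.prodComm (Fin N) (Fin ρ)) := by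
  ext ⟨i, b⟩ ⟨j, c⟩
  rw [Matrix.submatrix_apply, Equiv.prodComm_apply, Equiv.prodComm_apply]
  show (if i = j then jordanBlock ρ (μ i) b c else 0) = _
  rw [Matrix.blockDiagonal_apply]
  by_cases h : i = j
  · subst h
    simp
  · simp [h]

end RNJaux

/-- Every eigenspace of `R_N(J_ρ(λ))` for an `N`-th root of `λ` is one-dimensional,
and consequently the Jordan canonical form of `R_N(J_ρ(λ))` is
`J_ρ(λ₀) ⊕ ⋯ ⊕ J_ρ(λ_{N-1})`, where `λ₀, …, λ_{N-1}` are the `N` distinct `N`-th roots of `λ`. -/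
theorem RNJ_jordan_form (N ρ : ℕ) (hN : 1 ≤ N) (hρ : 1 ≤ ρ) (lam : ℂ) (hlam : lam ≠ 0) :
    (∀ μ : ℂ, μ ^ N = lam →
        Module.finrank ℂ ↥(Module.End.eigenspace (Matrix.mulVecLin (RNJ N ρ lam)) μ) = 1) ∧
    ∃ r : Fin N → ℂ, Function.Injective r ∧ (∀ k, r k ^ N = lam) ∧
      ∃ P : Matrix (Fin N × Fin ρ) (Fin N × Fin ρ) ℂ, IsUnit P ∧
        P * RNJ N ρ lam * P⁻¹ =
          (Matrix.blockDiagonal fun k : Fin N => jordanBlock ρ (r k)).submatrix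
            ⇑(Equiv.prodComm (Fin N) (Fin ρ)) ⇑(Equiv.prodComm (Fin N) (Fin ρ)) := by
  constructor
  · intro μ hμ
    exact RNJaux.eigen_part hN hρ lam μ hμ
  · set ζ : ℂ := Complex.exp (Complex.log lam / N) with hζdef
    have hζ : ζ ^ N = lam := by
      rw [hζdef, ← Complex.exp_nat_mul, mul_div_cancel₀ _ (by
        exact_mod_cast (by omega : N ≠ 0) : (N : ℂ) ≠ 0), Complex.exp_log hlam]
    set ω : ℂ := Complex.exp (2 * Real.pi * Complex.I / N) with hωdef
    have hω : IsPrimitiveRoot ω N := Complex.isPrimitiveRoot_exp N (by omega)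
    set μf : Fin N → ℂ := fun k => ζ * ω ^ (k : ℕ) with hμf
    have hζ0 : ζ ≠ 0 := Complex.exp_ne_zero _
    have hinj : Function.Injective μf := by
      intro k k' hkk
      have h1 : ω ^ (k : ℕ) = ω ^ (k' : ℕ) := mul_left_cancel₀ hζ0 hkk
      exact Fin.ext (hω.pow_inj k.isLt k'.isLt h1)
    have hpow : ∀ k, μf k ^ N = lam := by
      intro k
      rw [hμf]
      show (ζ * ω ^ (k : ℕ)) ^ N = lam
      rw [mul_pow, hζ, ← pow_mul, mul_comm (k : ℕ) N, pow_mul, hω.pow_eq_one, one_pow, mul_one]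
    refine ⟨μf, hinj, hpow, ?_⟩
    set Q := RNJaux.Qmat N ρ lam μf with hQdef
    have hRQ := RNJaux.RQ_eq_QT (ρ := ρ) hN lam μf hpow
    have hQU : IsUnit Q := by
      rw [hQdef, RNJaux.Q_eq_UW lam μf]
      exact (RNJaux.isUnit_Umat lam).mul (RNJaux.isUnit_Wmat hN μf hinj)
    have hdet : IsUnit Q.det := (Matrix.isUnit_iff_isUnit_det Q).mp hQU
    refine ⟨Q⁻¹, Matrix.isUnit_nonsing_inv_iff.mpr hQU, ?_⟩
    rw [Matrix.nonsing_inv_nonsing_inv Q hdet, ← RNJaux.Tmat_eq]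
    calc Q⁻¹ * RNJ N ρ lam * Q = Q⁻¹ * (Q * RNJaux.Tmat N ρ μf) := by
          rw [Matrix.mul_assoc, hRQ]
      _ = Q⁻¹ * Q * RNJaux.Tmat N ρ μf := by rw [Matrix.mul_assoc]
      _ = RNJaux.Tmat N ρ μf := by rw [Matrix.nonsing_inv_mul Q hdet, Matrix.one_mul]
end

section
/- Let S = ℂ[[x₁,…,x_m]], f ∈ S nonzero, and A = S/(f). Given a matrix factorization (φ, ψ) of f with φ, ψ : S^n → S^n, let φ̄, ψ̄ : A^n → A^n be the induced maps. Then the 2-periodic complex ⋯ → A^n →^{φ̄} A^n →^{ψ̄} A^n →^{φ̄} A^n → ⋯ is acyclic, i.e. im φ̄ = ker ψ̄ and im ψ̄ = ker φ̄. -/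
open Matrix

/-- For a matrix factorization `(φ, ψ)` of a nonzero `f ∈ S = ℂ[[x₁,…,x_m]]`, the induced
2-periodic complex over `A = S/(f)` is acyclic: `im φ̄ = ker ψ̄` and `im ψ̄ = ker φ̄`. -/
theorem matrix_factorization_two_periodic_acyclic (m n : ℕ)
    (f : MvPowerSeries (Fin m) ℂ) (hf : f ≠ 0)
    (φ ψ : Matrix (Fin n) (Fin n) (MvPowerSeries (Fin m) ℂ))
    (h1 : ψ * φ = f • 1) (h2 : φ * ψ = f • 1) :
    LinearMap.range (Matrix.mulVecLin (φ.map (Ideal.Quotient.mk (Ideal.span {f})))) =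
        LinearMap.ker (Matrix.mulVecLin (ψ.map (Ideal.Quotient.mk (Ideal.span {f})))) ∧
    LinearMap.range (Matrix.mulVecLin (ψ.map (Ideal.Quotient.mk (Ideal.span {f})))) =
        LinearMap.ker (Matrix.mulVecLin (φ.map (Ideal.Quotient.mk (Ideal.span {f})))) := by
  have hQf : Ideal.Quotient.mk (Ideal.span {f}) f = 0 :=
    Ideal.Quotient.eq_zero_iff_mem.2 (Ideal.mem_span_singleton_self f)
  have hzero : (f • (1 : Matrix (Fin n) (Fin n) (MvPowerSeries (Fin m) ℂ))).map
      (Ideal.Quotient.mk (Ideal.span {f})) = 0 := by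
    ext i j
    simp [Matrix.map_apply, Matrix.smul_apply, hQf]
  have key : ∀ (α β : Matrix (Fin n) (Fin n) (MvPowerSeries (Fin m) ℂ)),
      β * α = f • 1 → α * β = f • 1 →
      LinearMap.range (Matrix.mulVecLin (α.map (Ideal.Quotient.mk (Ideal.span {f})))) =
        LinearMap.ker (Matrix.mulVecLin (β.map (Ideal.Quotient.mk (Ideal.span {f})))) := by
    intro α β hβα hαβ
    apply le_antisymm
    · rintro _ ⟨v, rfl⟩
      simp only [LinearMap.mem_ker, mulVecLin_apply, mulVec_mulVec]
      rw [← Matrix.map_mul, hβα, hzero]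
      simp
    · rintro v hv
      simp only [LinearMap.mem_ker, mulVecLin_apply] at hv
      obtain ⟨u, rfl⟩ : ∃ u, (Ideal.Quotient.mk (Ideal.span {f})) ∘ u = v := by
        choose u hu using fun i => Ideal.Quotient.mk_surjective (v i)
        exact ⟨u, funext hu⟩
      have hdvd : ∀ i, f ∣ (β *ᵥ u) i := by
        intro i
        rw [← Ideal.mem_span_singleton, ← Ideal.Quotient.eq_zero_iff_mem]
        have := congrFun hv i
        rwa [RingHom.map_mulVec]
      choose w hw using hdvd
      have hcalc : α *ᵥ (β *ᵥ u) = f • u := by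
        rw [mulVec_mulVec, hαβ, Matrix.smul_mulVec, Matrix.one_mulVec]
      have hβu : β *ᵥ u = f • w := funext fun i => (hw i).trans rfl
      rw [hβu, mulVec_smul] at hcalc
      have hu_eq : u = α *ᵥ w := by
        funext i
        have := congrFun hcalc i
        simp only [Pi.smul_apply, smul_eq_mul] at this
        exact (mul_left_cancel₀ hf this.symm)
      refine ⟨(Ideal.Quotient.mk (Ideal.span {f})) ∘ w, ?_⟩
      simp only [mulVecLin_apply]
      funext i
      rw [← RingHom.map_mulVec, ← hu_eq]
      rfl
  exact ⟨key φ ψ h1 h2, key ψ φ h2 h1⟩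
end

section
/- Let S = ℂ[[x,y,z]] and λ ∈ ℂ with λ ≠ 1. Then the 4×4 degenerate matrix factorization (φ_deg, ψ_deg) of xyz with φ_deg = [[−zx, 0, 0, 0],[z, −y, 0, 0],[0, x, −z, 0],[−λx, 0, y, −xy]] and ψ_deg = [[−y, 0, 0, 0],[−z, −zx, 0, 0],[−x, −x², −xy, 0],[−1+λ, −x, −y, −z]] satisfies (φ_deg, ψ_deg) ≅ (φ((2,2,2),λ,1), ψ((2,2,2),λ,1)) ⊕ (xyz, 1) in MF(xyz), where φ((2,2,2),λ,1) = [[z, −y, 0],[0, x, −z],[−λx, 0, y]]. -/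
noncomputable section

open Matrix

/-- `S = ℂ[[x,y,z]]`. -/
abbrev S3 : Type := MvPowerSeries (Fin 3) ℂ

def xx : S3 := MvPowerSeries.X 0
def yy : S3 := MvPowerSeries.X 1
def zz : S3 := MvPowerSeries.X 2


section Aux
variable {R : Type*} [CommRing R] (x y z c L : R)

private lemma aux_phi_psi (hc : c * (1 - L) = 1) :
    !![z, -y, 0; 0, x, -z; -(L * x), 0, y] *
      !![c*(x*y), c*(y*y), c*(y*z);
         c*L*(x*z), c*(y*z), c*(z*z);
         c*L*(x*x), c*L*(x*y), c*(x*z)] = (x * y * z) • 1 := by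
  ext i j
  fin_cases i <;> fin_cases j <;>
    simp [Matrix.mul_apply, Fin.sum_univ_succ, Matrix.one_apply, smul_eq_mul] <;>
      first
        | ring1
        | linear_combination hc
        | linear_combination (-1 : R) * hc
        | linear_combination x * hc
        | linear_combination -x * hc
        | linear_combination y * hc
        | linear_combination -y * hc
        | linear_combination z * hc
        | linear_combination -z * hc
        | linear_combination x*z * hc
        | linear_combination -(x*z) * hc
        | linear_combination x*x * hc
        | linear_combination -(x*x) * hc
        | linear_combination x*y * hc
        | linear_combination -(x*y) * hc
        | linear_combination x*y*z * hc
        | linear_combination -(x*y*z) * hc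

private lemma aux_psi_phi (hc : c * (1 - L) = 1) :
    !![c*(x*y), c*(y*y), c*(y*z);
       c*L*(x*z), c*(y*z), c*(z*z);
       c*L*(x*x), c*L*(x*y), c*(x*z)] *
      !![z, -y, 0; 0, x, -z; -(L * x), 0, y] = (x * y * z) • 1 := by
  ext i j
  fin_cases i <;> fin_cases j <;>
    simp [Matrix.mul_apply, Fin.sum_univ_succ, Matrix.one_apply, smul_eq_mul] <;>
      first
        | ring1
        | linear_combination hc
        | linear_combination (-1 : R) * hc
        | linear_combination x * hc
        | linear_combination -x * hc
        | linear_combination y * hc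
        | linear_combination -y * hc
        | linear_combination z * hc
        | linear_combination -z * hc
        | linear_combination x*z * hc
        | linear_combination -(x*z) * hc
        | linear_combination x*x * hc
        | linear_combination -(x*x) * hc
        | linear_combination x*y * hc
        | linear_combination -(x*y) * hc
        | linear_combination x*y*z * hc
        | linear_combination -(x*y*z) * hc

private lemma aux_alpha_unit :
    IsUnit (!![1,0,0,-(c*y); 0,1,0,-(c*z); 0,0,1,-(c*x); 0,0,0,1] : Matrix (Fin 4) (Fin 4) R) := by
  refine ⟨⟨_, !![1,0,0,c*y; 0,1,0,c*z; 0,0,1,c*x; 0,0,0,1], ?_, ?_⟩, rfl⟩ <;>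
    · ext i j
      fin_cases i <;> fin_cases j <;>
        simp [Matrix.mul_apply, Fin.sum_univ_succ, Matrix.one_apply] <;> ring1

private lemma aux_beta_unit (hc : c * (1 - L) = 1) :
    IsUnit (!![0,1,0,0; 0,0,1,0; 0,0,0,1; L-1, -x, -y, -z] : Matrix (Fin 4) (Fin 4) R) := by
  refine ⟨⟨_, !![-(c*x), -(c*y), -(c*z), -c; 1,0,0,0; 0,1,0,0; 0,0,1,0], ?_, ?_⟩, rfl⟩ <;>
    · ext i j
      fin_cases i <;> fin_cases j <;>
        simp [Matrix.mul_apply, Fin.sum_univ_succ, Matrix.one_apply] <;>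
      first
        | ring1
        | linear_combination hc
        | linear_combination (-1 : R) * hc
        | linear_combination x * hc
        | linear_combination -x * hc
        | linear_combination y * hc
        | linear_combination -y * hc
        | linear_combination z * hc
        | linear_combination -z * hc
        | linear_combination x*z * hc
        | linear_combination -(x*z) * hc
        | linear_combination x*x * hc
        | linear_combination -(x*x) * hc
        | linear_combination x*y * hc
        | linear_combination -(x*y) * hc
        | linear_combination x*y*z * hc
        | linear_combination -(x*y*z) * hc

private lemma aux_beta_phid (hc : c * (1 - L) = 1) :
    (!![0,1,0,0; 0,0,1,0; 0,0,0,1; L-1, -x, -y, -z] : Matrix (Fin 4) (Fin 4) R) *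
      !![-(z * x), 0, 0, 0;
         z, -y, 0, 0;
         0, x, -z, 0;
         -(L * x), 0, y, -(x * y)] =
    !![z, -y, 0, 0;
       0, x, -z, 0;
       -(L * x), 0, y, 0;
       0, 0, 0, x * y * z] *
      !![1,0,0,-(c*y); 0,1,0,-(c*z); 0,0,1,-(c*x); 0,0,0,1] := by
  ext i j
  fin_cases i <;> fin_cases j <;>
    simp [Matrix.mul_apply, Fin.sum_univ_succ] <;>
      first
        | ring1
        | linear_combination hc
        | linear_combination (-1 : R) * hc
        | linear_combination x * hc
        | linear_combination -x * hc
        | linear_combination y * hc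
        | linear_combination -y * hc
        | linear_combination z * hc
        | linear_combination -z * hc
        | linear_combination x*z * hc
        | linear_combination -(x*z) * hc
        | linear_combination x*x * hc
        | linear_combination -(x*x) * hc
        | linear_combination x*y * hc
        | linear_combination -(x*y) * hc
        | linear_combination x*y*z * hc
        | linear_combination -(x*y*z) * hc

private lemma aux_alpha_psid (hc : c * (1 - L) = 1) :
    (!![1,0,0,-(c*y); 0,1,0,-(c*z); 0,0,1,-(c*x); 0,0,0,1] : Matrix (Fin 4) (Fin 4) R) *
      !![-y, 0, 0, 0;
         -z, -(z * x), 0, 0;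
         -x, -(x * x), -(x * y), 0;
         L - 1, -x, -y, -z] =
    !![c*(x*y), c*(y*y), c*(y*z), 0;
       c*L*(x*z), c*(y*z), c*(z*z), 0;
       c*L*(x*x), c*L*(x*y), c*(x*z), 0;
       0, 0, 0, 1] *
      !![0,1,0,0; 0,0,1,0; 0,0,0,1; L-1, -x, -y, -z] := by
  ext i j
  fin_cases i <;> fin_cases j <;>
    simp [Matrix.mul_apply, Fin.sum_univ_succ] <;>
      first
        | ring1
        | linear_combination hc
        | linear_combination (-1 : R) * hc
        | linear_combination x * hc
        | linear_combination -x * hc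
        | linear_combination y * hc
        | linear_combination -y * hc
        | linear_combination z * hc
        | linear_combination -z * hc
        | linear_combination x*z * hc
        | linear_combination -(x*z) * hc
        | linear_combination x*x * hc
        | linear_combination -(x*x) * hc
        | linear_combination x*y * hc
        | linear_combination -(x*y) * hc
        | linear_combination x*y*z * hc
        | linear_combination -(x*y*z) * hc

end Aux

/-- For `λ ≠ 1`, the 4×4 degenerate matrix factorization `(φ_deg, ψ_deg)` of `xyz` is
isomorphic in `MF(xyz)` to the direct sum of the 3×3 canonical matrix factorization
`(φ((2,2,2),λ,1), ψ((2,2,2),λ,1))` and the trivial factorization `(xyz, 1)`. -/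
theorem degenerate_reduces_to_canonical (lam : ℂ) (hlam : lam ≠ 1) :
    ∃ ψ222 : Matrix (Fin 3) (Fin 3) S3,
      !![zz, -yy, 0; 0, xx, -zz; -(algebraMap ℂ S3 lam * xx), 0, yy] * ψ222 =
          (xx * yy * zz) • 1 ∧
      ψ222 * !![zz, -yy, 0; 0, xx, -zz; -(algebraMap ℂ S3 lam * xx), 0, yy] =
          (xx * yy * zz) • 1 ∧
      ∃ α β : Matrix (Fin 4) (Fin 4) S3, IsUnit α ∧ IsUnit β ∧
        β * !![-(zz * xx), 0, 0, 0;
               zz, -yy, 0, 0;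
               0, xx, -zz, 0;
               -(algebraMap ℂ S3 lam * xx), 0, yy, -(xx * yy)] =
          !![zz, -yy, 0, 0;
             0, xx, -zz, 0;
             -(algebraMap ℂ S3 lam * xx), 0, yy, 0;
             0, 0, 0, xx * yy * zz] * α ∧
        α * !![-yy, 0, 0, 0;
               -zz, -(zz * xx), 0, 0;
               -xx, -(xx * xx), -(xx * yy), 0;
               algebraMap ℂ S3 lam - 1, -xx, -yy, -zz] =
          !![ψ222 0 0, ψ222 0 1, ψ222 0 2, 0;
             ψ222 1 0, ψ222 1 1, ψ222 1 2, 0;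
             ψ222 2 0, ψ222 2 1, ψ222 2 2, 0;
             0, 0, 0, 1] * β := by
  set L : S3 := algebraMap ℂ S3 lam with hL
  set c : S3 := algebraMap ℂ S3 (1 - lam)⁻¹ with hcdef
  have h1 : (1 : ℂ) - lam ≠ 0 := sub_ne_zero_of_ne (Ne.symm hlam)
  have hc : c * (1 - L) = 1 := by
    have h2 : ((1 - lam)⁻¹ * (1 - lam) : ℂ) = 1 := inv_mul_cancel₀ h1
    calc c * (1 - L) = algebraMap ℂ S3 ((1 - lam)⁻¹ * (1 - lam)) := by
          rw [hcdef, hL, _root_.map_mul, _root_.map_sub, _root_.map_one]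
      _ = 1 := by rw [h2, _root_.map_one]
  refine ⟨!![c*(xx*yy), c*(yy*yy), c*(yy*zz);
             c*L*(xx*zz), c*(yy*zz), c*(zz*zz);
             c*L*(xx*xx), c*L*(xx*yy), c*(xx*zz)],
          aux_phi_psi xx yy zz c L hc, aux_psi_phi xx yy zz c L hc,
          !![1,0,0,-(c*yy); 0,1,0,-(c*zz); 0,0,1,-(c*xx); 0,0,0,1],
          !![0,1,0,0; 0,0,1,0; 0,0,0,1; L-1, -xx, -yy, -zz],
          aux_alpha_unit xx yy zz c, aux_beta_unit xx yy zz c L hc,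
          aux_beta_phid xx yy zz c L hc, ?_⟩
  exact aux_alpha_psid xx yy zz c L hc
end
end

section
/- Let w' = (l₁',m₁',n₁',…,l_τ',m_τ',n_τ') ∈ ℤ^{3τ} be a normal loop word of length 3τ and define w ∈ ℤ^{3τ} by w_j = w_j' + 1 − 𝟙[w_{j−1}' ≥ 1] − 𝟙[w_j' ≥ 1] − 𝟙[w_{j+1}' ≥ 1] (indices mod 3τ). Conversely, given a band word w, define δ = δ(w) ∈ {0,1}^{3τ} by δ_j = 0 if w_j < 0, or if w_j = 0 and at least one of the first nonzero entries adjacent to the maximal string of 0's containing w_j is negative; δ_j = 1 otherwise; and set w_j' = w_j − 1 + δ_{j−1} + δ_j + δ_{j+1}. Then these two conversions are mutually inverse: applying the first and then the second to a normal loop word recovers it, and conversely. Moreover, for a normal loop word w', δ(w) = (𝟙[w_j' ≥ 1])_j. -/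
open Classical in
/-- The sign `δ(w)_j` associated to a band word `w`. -/
noncomputable def deltaW (n : ℕ) (w : ZMod n → ℤ) (j : ZMod n) : ℤ :=
  if w j < 0 ∨ (w j = 0 ∧
      ((∃ k : ℕ, 1 ≤ k ∧ (∀ l : ℕ, 1 ≤ l → l < k → w (j - (l : ZMod n)) = 0) ∧
          w (j - (k : ZMod n)) < 0) ∨
       (∃ k : ℕ, 1 ≤ k ∧ (∀ l : ℕ, 1 ≤ l → l < k → w (j + (l : ZMod n)) = 0) ∧
          w (j + (k : ZMod n)) < 0)))
  then 0 else 1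

/-- Conversion from a loop word to a band word:
`w_j = w'_j + 1 − 𝟙[w'_{j−1} ≥ 1] − 𝟙[w'_j ≥ 1] − 𝟙[w'_{j+1} ≥ 1]`. -/
def toBand (n : ℕ) (w' : ZMod n → ℤ) : ZMod n → ℤ := fun j =>
  w' j + 1 - (if 1 ≤ w' (j - 1) then 1 else 0) - (if 1 ≤ w' j then 1 else 0) -
    (if 1 ≤ w' (j + 1) then 1 else 0)

/-- Conversion from a band word to a loop word:
`w'_j = w_j − 1 + δ_{j−1} + δ_j + δ_{j+1}`. -/
noncomputable def toLoop (n : ℕ) (w : ZMod n → ℤ) : ZMod n → ℤ := fun j =>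
  w j - 1 + deltaW n w (j - 1) + deltaW n w j + deltaW n w (j + 1)

/-- A loop word is normal if: every subword `(a,1,b)` has `a, b ≤ 0`; every subword
`(a,0,b)` satisfies `a ≤ −1, b ≥ 1` or `a ≥ 1, b ≤ −1` or `a, b ≥ 1`; there is no
cyclic subword `(0,−1,…,−1,0)`; and the word is not constantly `−1`. -/
def IsNormalLoopWord (n : ℕ) (w' : ZMod n → ℤ) : Prop :=
  (∀ j, w' j = 1 → w' (j - 1) ≤ 0 ∧ w' (j + 1) ≤ 0) ∧
  (∀ j, w' j = 0 →
      (w' (j - 1) ≤ -1 ∧ 1 ≤ w' (j + 1)) ∨ (1 ≤ w' (j - 1) ∧ w' (j + 1) ≤ -1) ∨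
      (1 ≤ w' (j - 1) ∧ 1 ≤ w' (j + 1))) ∧
  (¬ ∃ (j : ZMod n) (k : ℕ), 1 ≤ k ∧ k + 2 ≤ n ∧ w' j = 0 ∧
      (∀ l : ℕ, 1 ≤ l → l ≤ k → w' (j + (l : ZMod n)) = -1) ∧
      w' (j + ((k + 1 : ℕ) : ZMod n)) = 0) ∧
  (¬ ∀ j, w' j = -1)

section Aux
variable {n : ℕ}

lemma castSub1 {l : ℕ} (hl : 1 ≤ l) : ((l : ℕ) : ZMod n) = ((l - 1 : ℕ) : ZMod n) + 1 := by
  conv_lhs => rw [← Nat.sub_add_cancel hl]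
  push_cast
  ring

/-- Left witness: a string of zeros to the left followed by a negative entry. -/
def LWit (n : ℕ) (w : ZMod n → ℤ) (j : ZMod n) : Prop :=
  ∃ k : ℕ, 1 ≤ k ∧ (∀ l : ℕ, 1 ≤ l → l < k → w (j - (l : ZMod n)) = 0) ∧
    w (j - (k : ZMod n)) < 0

/-- Right witness: a string of zeros to the right followed by a negative entry. -/
def RWit (n : ℕ) (w : ZMod n → ℤ) (j : ZMod n) : Prop :=
  ∃ k : ℕ, 1 ≤ k ∧ (∀ l : ℕ, 1 ≤ l → l < k → w (j + (l : ZMod n)) = 0) ∧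
    w (j + (k : ZMod n)) < 0

lemma deltaW_eq_zero_iff (w : ZMod n → ℤ) (j : ZMod n) :
    deltaW n w j = 0 ↔ (w j < 0 ∨ (w j = 0 ∧ (LWit n w j ∨ RWit n w j))) := by
  unfold deltaW LWit RWit
  split <;> simp_all

lemma deltaW_eq_one (w : ZMod n → ℤ) (j : ZMod n)
    (h : ¬(w j < 0 ∨ (w j = 0 ∧ (LWit n w j ∨ RWit n w j)))) : deltaW n w j = 1 := by
  unfold LWit RWit at h
  unfold deltaW
  rw [if_neg h]

lemma deltaW_nonneg (w : ZMod n → ℤ) (j : ZMod n) : 0 ≤ deltaW n w j := by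
  unfold deltaW; split <;> norm_num

lemma deltaW_le_one (w : ZMod n → ℤ) (j : ZMod n) : deltaW n w j ≤ 1 := by
  unfold deltaW; split <;> norm_num

lemma RWit.of_neg {w : ZMod n → ℤ} {j : ZMod n} (h : w (j + 1) < 0) : RWit n w j := by
  refine ⟨1, le_rfl, by omega, by simpa using h⟩

lemma LWit.of_neg {w : ZMod n → ℤ} {j : ZMod n} (h : w (j - 1) < 0) : LWit n w j := by
  refine ⟨1, le_rfl, by omega, by simpa using h⟩

lemma RWit.of_right {w : ZMod n → ℤ} {j : ZMod n} (h0 : w (j + 1) = 0)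
    (h : RWit n w (j + 1)) : RWit n w j := by
  obtain ⟨k, hk, hz, hneg⟩ := h
  refine ⟨k + 1, by omega, ?_, ?_⟩
  · intro l hl hlk
    rcases eq_or_lt_of_le hl with h1 | h1
    · have e : ((l : ℕ) : ZMod n) = 1 := by rw [← h1]; norm_num
      rw [e]; exact h0
    · have e : j + (l : ZMod n) = (j + 1) + ((l - 1 : ℕ) : ZMod n) := by
        rw [castSub1 hl]; ring
      rw [e]; exact hz (l - 1) (by omega) (by omega)
  · have e : j + ((k + 1 : ℕ) : ZMod n) = (j + 1) + (k : ZMod n) := by push_cast; ring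
    rw [e]; exact hneg

lemma LWit.of_left {w : ZMod n → ℤ} {j : ZMod n} (h0 : w (j - 1) = 0)
    (h : LWit n w (j - 1)) : LWit n w j := by
  obtain ⟨k, hk, hz, hneg⟩ := h
  refine ⟨k + 1, by omega, ?_, ?_⟩
  · intro l hl hlk
    rcases eq_or_lt_of_le hl with h1 | h1
    · have e : ((l : ℕ) : ZMod n) = 1 := by rw [← h1]; norm_num
      rw [e]; exact h0
    · have e : j - (l : ZMod n) = (j - 1) - ((l - 1 : ℕ) : ZMod n) := by
        rw [castSub1 hl]; ring
      rw [e]; exact hz (l - 1) (by omega) (by omega)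
  · have e : j - ((k + 1 : ℕ) : ZMod n) = (j - 1) - (k : ZMod n) := by push_cast; ring
    rw [e]; exact hneg

lemma RWit.step {w : ZMod n → ℤ} {j : ZMod n} (h : RWit n w j) :
    w (j + 1) < 0 ∨ (w (j + 1) = 0 ∧ RWit n w (j + 1)) := by
  obtain ⟨k, hk, hz, hneg⟩ := h
  rcases eq_or_lt_of_le hk with h1 | h1
  · left
    have e : j + ((k : ℕ) : ZMod n) = j + 1 := by rw [← h1]; norm_num
    rwa [e] at hneg
  · right
    have h0 : w (j + 1) = 0 := by simpa using hz 1 le_rfl h1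
    refine ⟨h0, k - 1, by omega, ?_, ?_⟩
    · intro l hl hlk
      have e : (j + 1) + (l : ZMod n) = j + ((l + 1 : ℕ) : ZMod n) := by push_cast; ring
      rw [e]; exact hz (l + 1) (by omega) (by omega)
    · have e : (j + 1) + ((k - 1 : ℕ) : ZMod n) = j + (k : ZMod n) := by
        rw [castSub1 hk]; ring
      rw [e]; exact hneg

lemma LWit.step {w : ZMod n → ℤ} {j : ZMod n} (h : LWit n w j) :
    w (j - 1) < 0 ∨ (w (j - 1) = 0 ∧ LWit n w (j - 1)) := by
  obtain ⟨k, hk, hz, hneg⟩ := h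
  rcases eq_or_lt_of_le hk with h1 | h1
  · left
    have e : j - ((k : ℕ) : ZMod n) = j - 1 := by rw [← h1]; norm_num
    rwa [e] at hneg
  · right
    have h0 : w (j - 1) = 0 := by simpa using hz 1 le_rfl h1
    refine ⟨h0, k - 1, by omega, ?_, ?_⟩
    · intro l hl hlk
      have e : (j - 1) - (l : ZMod n) = j - ((l + 1 : ℕ) : ZMod n) := by push_cast; ring
      rw [e]; exact hz (l + 1) (by omega) (by omega)
    · have e : (j - 1) - ((k - 1 : ℕ) : ZMod n) = j - (k : ZMod n) := by
        rw [castSub1 hk]; ring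
      rw [e]; exact hneg

/-- A left witness at `j+1` transfers to a left witness at `j`, provided `w j = 0`. -/
lemma LWit.cross {w : ZMod n → ℤ} {j : ZMod n} (hj : w j = 0) (h : LWit n w (j + 1)) :
    LWit n w j := by
  obtain ⟨k, hk, hz, hneg⟩ := h
  rcases eq_or_lt_of_le hk with h1 | h1
  · exfalso
    have e : (j + 1) - ((k : ℕ) : ZMod n) = j := by rw [← h1]; push_cast; ring
    rw [e, hj] at hneg; exact lt_irrefl 0 hneg
  · refine ⟨k - 1, by omega, ?_, ?_⟩
    · intro l hl hlk
      have e : j - (l : ZMod n) = (j + 1) - ((l + 1 : ℕ) : ZMod n) := by push_cast; ring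
      rw [e]; exact hz (l + 1) (by omega) (by omega)
    · have e : j - ((k - 1 : ℕ) : ZMod n) = (j + 1) - (k : ZMod n) := by
        rw [castSub1 hk]; ring
      rw [e]; exact hneg

/-- A right witness at `j-1` transfers to a right witness at `j`, provided `w j = 0`. -/
lemma RWit.cross {w : ZMod n → ℤ} {j : ZMod n} (hj : w j = 0) (h : RWit n w (j - 1)) :
    RWit n w j := by
  obtain ⟨k, hk, hz, hneg⟩ := h
  rcases eq_or_lt_of_le hk with h1 | h1
  · exfalso
    have e : (j - 1) + ((k : ℕ) : ZMod n) = j := by rw [← h1]; push_cast; ring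
    rw [e, hj] at hneg; exact lt_irrefl 0 hneg
  · refine ⟨k - 1, by omega, ?_, ?_⟩
    · intro l hl hlk
      have e : j + (l : ZMod n) = (j - 1) + ((l + 1 : ℕ) : ZMod n) := by push_cast; ring
      rw [e]; exact hz (l + 1) (by omega) (by omega)
    · have e : j + ((k - 1 : ℕ) : ZMod n) = (j - 1) + (k : ZMod n) := by
        rw [castSub1 hk]; ring
      rw [e]; exact hneg


end Aux


section Part2
variable {n : ℕ}

lemma deltaW_eq_indicator (w : ZMod n → ℤ) (j : ZMod n) :
    deltaW n w j = if 1 ≤ toLoop n w j then 1 else 0 := by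
  have d01 := deltaW_nonneg w
  have d1 := deltaW_le_one w
  rcases lt_trichotomy (w j) 0 with h | h | h
  · -- negative entry: delta = 0 and toLoop ≤ 0
    have hd : deltaW n w j = 0 := (deltaW_eq_zero_iff w j).2 (Or.inl h)
    rw [hd, if_neg]
    simp only [toLoop]
    have := d01 (j - 1); have := d1 (j - 1); have := d01 (j + 1); have := d1 (j + 1)
    rw [hd]
    omega
  · by_cases hwit : LWit n w j ∨ RWit n w j
    · -- delta = 0, and a neighbour on the witness side also has delta = 0
      have hd : deltaW n w j = 0 := (deltaW_eq_zero_iff w j).2 (Or.inr ⟨h, hwit⟩)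
      have hnb : deltaW n w (j - 1) = 0 ∨ deltaW n w (j + 1) = 0 := by
        rcases hwit with hL | hR
        · left
          rcases hL.step with h' | ⟨h0, h'⟩
          · exact (deltaW_eq_zero_iff w _).2 (Or.inl h')
          · exact (deltaW_eq_zero_iff w _).2 (Or.inr ⟨h0, Or.inl h'⟩)
        · right
          rcases hR.step with h' | ⟨h0, h'⟩
          · exact (deltaW_eq_zero_iff w _).2 (Or.inl h')
          · exact (deltaW_eq_zero_iff w _).2 (Or.inr ⟨h0, Or.inr h'⟩)
      rw [hd, if_neg]
      simp only [toLoop]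
      have := d01 (j - 1); have := d1 (j - 1); have := d01 (j + 1); have := d1 (j + 1)
      rw [hd]
      omega
    · -- delta = 1, and both neighbours have delta = 1
      push_neg at hwit
      have hd : deltaW n w j = 1 := deltaW_eq_one w j (by
        rintro (h' | ⟨-, h'⟩)
        · omega
        · rcases h' with h' | h' <;> simp_all)
      have hdp : deltaW n w (j + 1) = 1 := by
        refine deltaW_eq_one w _ ?_
        rintro (h' | ⟨h0, hL | hR⟩)
        · exact hwit.2 (RWit.of_neg h')
        · exact hwit.1 (hL.cross h)
        · exact hwit.2 (hR.of_right h0)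
      have hdm : deltaW n w (j - 1) = 1 := by
        refine deltaW_eq_one w _ ?_
        rintro (h' | ⟨h0, hL | hR⟩)
        · exact hwit.1 (LWit.of_neg h')
        · exact hwit.1 (hL.of_left h0)
        · exact hwit.2 (hR.cross h)
      rw [hd, if_pos]
      simp only [toLoop]
      rw [hd, hdp, hdm]
      omega
  · -- positive entry: delta = 1 and toLoop ≥ 1
    have hd : deltaW n w j = 1 := deltaW_eq_one w j (by rintro (h' | ⟨h', -⟩) <;> omega)
    rw [hd, if_pos]
    simp only [toLoop]
    have := d01 (j - 1); have := d01 (j + 1)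
    rw [hd]
    omega

lemma toBand_toLoop (w : ZMod n → ℤ) : toBand n (toLoop n w) = w := by
  funext j
  simp only [toBand, ← deltaW_eq_indicator]
  simp only [toLoop]
  ring

end Part2

section Part3
variable {n : ℕ} {w' : ZMod n → ℤ}

/-- If `w'_p ≥ 1` then the band value at `p` is nonnegative (uses normality of 1's). -/
lemma band_nonneg (h1 : ∀ j, w' j = 1 → w' (j - 1) ≤ 0 ∧ w' (j + 1) ≤ 0)
    (p : ZMod n) (hp : 1 ≤ w' p) : 0 ≤ toBand n w' p := by
  by_cases hp1 : w' p = 1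
  · obtain ⟨ha, hb⟩ := h1 p hp1
    simp only [toBand]; split_ifs <;> omega
  · simp only [toBand]; split_ifs <;> omega

/-- If `w'_p ≥ 1` and the band value at `p` is zero, then `w'_p = 2` and both
neighbours are ≥ 1. -/
lemma band_zero_step (h1 : ∀ j, w' j = 1 → w' (j - 1) ≤ 0 ∧ w' (j + 1) ≤ 0)
    (p : ZMod n) (hp : 1 ≤ w' p) (hz : toBand n w' p = 0) :
    w' p = 2 ∧ 1 ≤ w' (p - 1) ∧ 1 ≤ w' (p + 1) := by
  by_cases hp1 : w' p = 1
  · obtain ⟨ha, hb⟩ := h1 p hp1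
    simp only [toBand] at hz; split_ifs at hz <;> omega
  · simp only [toBand] at hz; split_ifs at hz <;> omega

/-- Zero-string propagation to the right: if `w'_{j+1} ≥ 1` and the band word vanishes
at `j+1, …, j+k-1`, then the band value at `j+k` is nonnegative. -/
lemma band_string_right (h1 : ∀ j, w' j = 1 → w' (j - 1) ≤ 0 ∧ w' (j + 1) ≤ 0)
    (j : ZMod n) (h : 1 ≤ w' (j + 1)) (k : ℕ) (hk : 1 ≤ k)
    (hz : ∀ l : ℕ, 1 ≤ l → l < k → toBand n w' (j + (l : ZMod n)) = 0) :
    0 ≤ toBand n w' (j + (k : ZMod n)) := by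
  have H : ∀ m : ℕ, m + 1 ≤ k → 1 ≤ w' (j + ((m + 1 : ℕ) : ZMod n)) := by
    intro m
    induction m with
    | zero => intro _; simpa using h
    | succ i ih =>
      intro hm
      have hprev := ih (by omega)
      have hz' : toBand n w' (j + ((i + 1 : ℕ) : ZMod n)) = 0 :=
        hz (i + 1) (by omega) (by omega)
      have hs := (band_zero_step h1 _ hprev hz').2.2
      have e : (j + ((i + 1 : ℕ) : ZMod n)) + 1 = j + ((i + 1 + 1 : ℕ) : ZMod n) := by
        push_cast; ring
      rwa [e] at hs
  have hk1 : 1 ≤ w' (j + ((k - 1 + 1 : ℕ) : ZMod n)) := H (k - 1) (by omega)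
  have e : (k - 1 + 1 : ℕ) = k := by omega
  rw [e] at hk1
  exact band_nonneg h1 _ hk1

/-- Zero-string propagation to the left. -/
lemma band_string_left (h1 : ∀ j, w' j = 1 → w' (j - 1) ≤ 0 ∧ w' (j + 1) ≤ 0)
    (j : ZMod n) (h : 1 ≤ w' (j - 1)) (k : ℕ) (hk : 1 ≤ k)
    (hz : ∀ l : ℕ, 1 ≤ l → l < k → toBand n w' (j - (l : ZMod n)) = 0) :
    0 ≤ toBand n w' (j - (k : ZMod n)) := by
  have H : ∀ m : ℕ, m + 1 ≤ k → 1 ≤ w' (j - ((m + 1 : ℕ) : ZMod n)) := by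
    intro m
    induction m with
    | zero => intro _; simpa using h
    | succ i ih =>
      intro hm
      have hprev := ih (by omega)
      have hz' : toBand n w' (j - ((i + 1 : ℕ) : ZMod n)) = 0 :=
        hz (i + 1) (by omega) (by omega)
      have hs := (band_zero_step h1 _ hprev hz').2.1
      have e : (j - ((i + 1 : ℕ) : ZMod n)) - 1 = j - ((i + 1 + 1 : ℕ) : ZMod n) := by
        push_cast; ring
      rwa [e] at hs
  have hk1 : 1 ≤ w' (j - ((k - 1 + 1 : ℕ) : ZMod n)) := H (k - 1) (by omega)
  have e : (k - 1 + 1 : ℕ) = k := by omega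
  rw [e] at hk1
  exact band_nonneg h1 _ hk1


/-- A run of `-1`'s to the right of `j`, terminated by something ≤ -2, or by something
≥ 1 provided the run is nonempty, yields a right witness for the band word at `j`. -/
lemma run_witness_right (j : ZMod n) (hj : w' j ≤ 0) (m : ℕ) (hm : 1 ≤ m)
    (hrun : ∀ l : ℕ, 1 ≤ l → l < m → w' (j + (l : ZMod n)) = -1)
    (hterm : w' (j + (m : ZMod n)) ≤ -2 ∨ (2 ≤ m ∧ 1 ≤ w' (j + (m : ZMod n)))) :
    RWit n (toBand n w') j := by
  have hleft : ∀ l : ℕ, 1 ≤ l → l < m → w' (j + (l : ZMod n) - 1) ≤ 0 := by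
    intro l hl hlm
    have e1 : j + (l : ZMod n) - 1 = j + ((l - 1 : ℕ) : ZMod n) := by
      rw [castSub1 hl]; ring
    rw [e1]
    by_cases hl1 : l = 1
    · subst hl1; simpa using hj
    · have := hrun (l - 1) (by omega) (by omega); omega
  rcases hterm with ht | ⟨hm2, ht⟩
  · refine ⟨m, hm, ?_, ?_⟩
    · intro l hl hlm
      have hv := hrun l hl hlm
      have hL := hleft l hl hlm
      have e2 : j + (l : ZMod n) + 1 = j + ((l + 1 : ℕ) : ZMod n) := by push_cast; ring
      have hright : w' (j + ((l + 1 : ℕ) : ZMod n)) ≤ 0 := by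
        rcases lt_or_eq_of_le (Nat.succ_le_of_lt hlm) with h2 | h2
        · have := hrun (l + 1) (by omega) h2; omega
        · have e3 : ((l + 1 : ℕ) : ZMod n) = ((m : ℕ) : ZMod n) := by
            rw [show l + 1 = m from h2]
          rw [e3]; omega
      simp only [toBand]
      rw [e2]
      split_ifs <;> omega
    · simp only [toBand]
      split_ifs <;> omega
  · refine ⟨m - 1, by omega, ?_, ?_⟩
    · intro l hl hlm
      have hv := hrun l hl (by omega)
      have hL := hleft l hl (by omega)
      have e2 : j + (l : ZMod n) + 1 = j + ((l + 1 : ℕ) : ZMod n) := by push_cast; ring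
      have hright : w' (j + ((l + 1 : ℕ) : ZMod n)) ≤ 0 := by
        have := hrun (l + 1) (by omega) (by omega); omega
      simp only [toBand]
      rw [e2]
      split_ifs <;> omega
    · have hv := hrun (m - 1) (by omega) (by omega)
      have e2 : j + ((m - 1 : ℕ) : ZMod n) + 1 = j + ((m : ℕ) : ZMod n) := by
        rw [castSub1 hm]; ring
      simp only [toBand]
      rw [e2]
      split_ifs <;> omega

/-- Mirror image of `run_witness_right`. -/
lemma run_witness_left (j : ZMod n) (hj : w' j ≤ 0) (m : ℕ) (hm : 1 ≤ m)
    (hrun : ∀ l : ℕ, 1 ≤ l → l < m → w' (j - (l : ZMod n)) = -1)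
    (hterm : w' (j - (m : ZMod n)) ≤ -2 ∨ (2 ≤ m ∧ 1 ≤ w' (j - (m : ZMod n)))) :
    LWit n (toBand n w') j := by
  have hright : ∀ l : ℕ, 1 ≤ l → l < m → w' (j - (l : ZMod n) + 1) ≤ 0 := by
    intro l hl hlm
    have e1 : j - (l : ZMod n) + 1 = j - ((l - 1 : ℕ) : ZMod n) := by
      rw [castSub1 hl]; ring
    rw [e1]
    by_cases hl1 : l = 1
    · subst hl1; simpa using hj
    · have := hrun (l - 1) (by omega) (by omega); omega
  rcases hterm with ht | ⟨hm2, ht⟩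
  · refine ⟨m, hm, ?_, ?_⟩
    · intro l hl hlm
      have hv := hrun l hl hlm
      have hR := hright l hl hlm
      have e2 : j - (l : ZMod n) - 1 = j - ((l + 1 : ℕ) : ZMod n) := by push_cast; ring
      have hleft : w' (j - ((l + 1 : ℕ) : ZMod n)) ≤ 0 := by
        rcases lt_or_eq_of_le (Nat.succ_le_of_lt hlm) with h2 | h2
        · have := hrun (l + 1) (by omega) h2; omega
        · have e3 : ((l + 1 : ℕ) : ZMod n) = ((m : ℕ) : ZMod n) := by
            rw [show l + 1 = m from h2]
          rw [e3]; omega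
      simp only [toBand]
      rw [e2]
      split_ifs <;> omega
    · simp only [toBand]
      split_ifs <;> omega
  · refine ⟨m - 1, by omega, ?_, ?_⟩
    · intro l hl hlm
      have hv := hrun l hl (by omega)
      have hR := hright l hl (by omega)
      have e2 : j - (l : ZMod n) - 1 = j - ((l + 1 : ℕ) : ZMod n) := by push_cast; ring
      have hleft : w' (j - ((l + 1 : ℕ) : ZMod n)) ≤ 0 := by
        have := hrun (l + 1) (by omega) (by omega); omega
      simp only [toBand]
      rw [e2]
      split_ifs <;> omega
    · have hv := hrun (m - 1) (by omega) (by omega)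
      have e2 : j - ((m - 1 : ℕ) : ZMod n) - 1 = j - ((m : ℕ) : ZMod n) := by
        rw [castSub1 hm]; ring
      simp only [toBand]
      rw [e2]
      split_ifs <;> omega

/-- Extract a minimal run of `-1`'s to the right. -/
lemma find_run_right (w' : ZMod n → ℤ) (j : ZMod n)
    (hex : ∃ m : ℕ, 1 ≤ m ∧ w' (j + (m : ZMod n)) ≠ -1) :
    ∃ m : ℕ, 1 ≤ m ∧ w' (j + (m : ZMod n)) ≠ -1 ∧
      (∀ l : ℕ, 1 ≤ l → l < m → w' (j + (l : ZMod n)) = -1) ∧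
      (∀ m' : ℕ, 1 ≤ m' → w' (j + (m' : ZMod n)) ≠ -1 → m ≤ m') := by
  classical
  refine ⟨Nat.find hex, (Nat.find_spec hex).1, (Nat.find_spec hex).2, ?_, ?_⟩
  · intro l hl hlm
    by_contra hne
    have hle : Nat.find hex ≤ l := Nat.find_le ⟨hl, hne⟩
    omega
  · intro m' h1' h2'
    exact Nat.find_le ⟨h1', h2'⟩

/-- Extract a minimal run of `-1`'s to the left. -/
lemma find_run_left (w' : ZMod n → ℤ) (j : ZMod n)
    (hex : ∃ m : ℕ, 1 ≤ m ∧ w' (j - (m : ZMod n)) ≠ -1) :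
    ∃ m : ℕ, 1 ≤ m ∧ w' (j - (m : ZMod n)) ≠ -1 ∧
      (∀ l : ℕ, 1 ≤ l → l < m → w' (j - (l : ZMod n)) = -1) ∧
      (∀ m' : ℕ, 1 ≤ m' → w' (j - (m' : ZMod n)) ≠ -1 → m ≤ m') := by
  classical
  refine ⟨Nat.find hex, (Nat.find_spec hex).1, (Nat.find_spec hex).2, ?_, ?_⟩
  · intro l hl hlm
    by_contra hne
    have hle : Nat.find hex ≤ l := Nat.find_le ⟨hl, hne⟩
    omega
  · intro m' h1' h2'
    exact Nat.find_le ⟨h1', h2'⟩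

end Part3


lemma key_delta {n : ℕ} (hn : 3 ≤ n) (w' : ZMod n → ℤ) (hw' : IsNormalLoopWord n w')
    (j : ZMod n) : deltaW n (toBand n w') j = if 1 ≤ w' j then 1 else 0 := by
  obtain ⟨h1, h0, hfb, hneg1⟩ := hw'
  haveI hnz : NeZero n := ⟨by omega⟩
  have hcast : ((n - 1 : ℕ) : ZMod n) = -1 := by
    rw [Nat.cast_sub (by omega : 1 ≤ n), ZMod.natCast_self, Nat.cast_one]; ring
  by_cases hj1 : 1 ≤ w' j
  · -- Case A : `w'_j ≥ 1`, show `δ_j = 1`.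
    rw [if_pos hj1]
    refine deltaW_eq_one _ _ ?_
    rintro (hneg | ⟨hzero, hL | hR⟩)
    · exact absurd hneg (not_lt.2 (band_nonneg h1 j hj1))
    · obtain ⟨-, hb, -⟩ := band_zero_step h1 j hj1 hzero
      obtain ⟨k, hk, hz, hneg⟩ := hL
      exact absurd hneg (not_lt.2 (band_string_left h1 j hb k hk hz))
    · obtain ⟨-, -, hb⟩ := band_zero_step h1 j hj1 hzero
      obtain ⟨k, hk, hz, hneg⟩ := hR
      exact absurd hneg (not_lt.2 (band_string_right h1 j hb k hk hz))
  · rw [if_neg hj1, deltaW_eq_zero_iff]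
    by_cases hj0 : w' j = 0
    · -- Case B : `w'_j = 0`.
      rcases h0 j hj0 with ⟨ha, hb⟩ | ⟨ha, hb⟩ | ⟨ha, hb⟩
      · -- left neighbour negative, right positive : band value 0, left witness
        refine Or.inr ⟨by simp only [toBand]; split_ifs <;> omega, Or.inl ?_⟩
        have hw1 : w' (j - ((n - 1 : ℕ) : ZMod n)) ≠ -1 := by
          rw [hcast]
          have e : j - (-1 : ZMod n) = j + 1 := by ring
          rw [e]; omega
        obtain ⟨m, hm, htm, hrun, hmin⟩ := find_run_left w' j ⟨n - 1, by omega, hw1⟩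
        have trich : w' (j - (m : ZMod n)) ≤ -2 ∨ w' (j - (m : ZMod n)) = 0 ∨
            1 ≤ w' (j - (m : ZMod n)) := by omega
        rcases trich with ht2 | ht2 | ht2
        · exact run_witness_left j (by omega) m hm hrun (Or.inl ht2)
        · exfalso
          have hm2 : 2 ≤ m := by
            rcases eq_or_lt_of_le hm with h' | h'
            · rw [← h'] at ht2; simp at ht2; omega
            · omega
          have hmn : m ≤ n - 1 := hmin (n - 1) (by omega) hw1
          refine hfb ⟨j - (m : ZMod n), m - 1, by omega, by omega, ht2, ?_, ?_⟩
          · intro l hl hlk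
            have e : j - (m : ZMod n) + (l : ZMod n) = j - ((m - l : ℕ) : ZMod n) := by
              have e0 : ((m : ℕ) : ZMod n) = ((m - l : ℕ) : ZMod n) + (l : ZMod n) := by
                rw [← Nat.cast_add]; congr 1; omega
              rw [e0]; ring
            rw [e]; exact hrun (m - l) (by omega) (by omega)
          · have e : j - (m : ZMod n) + ((m - 1 + 1 : ℕ) : ZMod n) = j := by
              rw [show m - 1 + 1 = m from by omega]; ring
            rw [e]; exact hj0
        · have hm2 : 2 ≤ m := by
            rcases eq_or_lt_of_le hm with h' | h'
            · rw [← h'] at ht2; simp at ht2; omega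
            · omega
          exact run_witness_left j (by omega) m hm hrun (Or.inr ⟨hm2, ht2⟩)
      · -- left neighbour positive, right negative : band value 0, right witness
        refine Or.inr ⟨by simp only [toBand]; split_ifs <;> omega, Or.inr ?_⟩
        have hw1 : w' (j + ((n - 1 : ℕ) : ZMod n)) ≠ -1 := by
          rw [hcast]
          have e : j + (-1 : ZMod n) = j - 1 := by ring
          rw [e]; omega
        obtain ⟨m, hm, htm, hrun, hmin⟩ := find_run_right w' j ⟨n - 1, by omega, hw1⟩
        have trich : w' (j + (m : ZMod n)) ≤ -2 ∨ w' (j + (m : ZMod n)) = 0 ∨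
            1 ≤ w' (j + (m : ZMod n)) := by omega
        rcases trich with ht2 | ht2 | ht2
        · exact run_witness_right j (by omega) m hm hrun (Or.inl ht2)
        · exfalso
          have hm2 : 2 ≤ m := by
            rcases eq_or_lt_of_le hm with h' | h'
            · rw [← h'] at ht2; simp at ht2; omega
            · omega
          have hmn : m ≤ n - 1 := hmin (n - 1) (by omega) hw1
          refine hfb ⟨j, m - 1, by omega, by omega, hj0, ?_, ?_⟩
          · intro l hl hlk
            exact hrun l hl (by omega)
          · rw [show m - 1 + 1 = m from by omega]; exact ht2
        · have hm2 : 2 ≤ m := by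
            rcases eq_or_lt_of_le hm with h' | h'
            · rw [← h'] at ht2; simp at ht2; omega
            · omega
          exact run_witness_right j (by omega) m hm hrun (Or.inr ⟨hm2, ht2⟩)
      · -- both neighbours positive : band value is negative
        exact Or.inl (by simp only [toBand]; split_ifs <;> omega)
    · -- Case C : `w'_j ≤ -1`.
      have hjneg : w' j ≤ -1 := by omega
      by_cases hWneg : toBand n w' j < 0
      · exact Or.inl hWneg
      · have hkey : w' j = -1 ∧ w' (j - 1) ≤ 0 ∧ w' (j + 1) ≤ 0 ∧ toBand n w' j = 0 := by
          simp only [toBand] at hWneg ⊢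
          split_ifs at hWneg ⊢ <;> omega
        obtain ⟨hv, ha, hb, hW0⟩ := hkey
        refine Or.inr ⟨hW0, ?_⟩
        push_neg at hneg1
        obtain ⟨i, hi⟩ := hneg1
        have hij : i ≠ j := fun h => hi (by rw [h]; exact hv)
        have hexR : ∃ m : ℕ, 1 ≤ m ∧ w' (j + (m : ZMod n)) ≠ -1 := by
          refine ⟨(i - j).val, ?_, ?_⟩
          · have h' : i - j ≠ 0 := sub_ne_zero.2 hij
            have := (ZMod.val_eq_zero (i - j)).not.2 h'
            omega
          · have e0 : (((i - j).val : ℕ) : ZMod n) = i - j := ZMod.natCast_rightInverse (i - j)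
            have e : j + (((i - j).val : ℕ) : ZMod n) = i := by rw [e0]; ring
            rw [e]; exact hi
        obtain ⟨m, hm, htm, hrun, hmin⟩ := find_run_right w' j hexR
        have trich : w' (j + (m : ZMod n)) ≤ -2 ∨ w' (j + (m : ZMod n)) = 0 ∨
            1 ≤ w' (j + (m : ZMod n)) := by omega
        rcases trich with ht2 | ht2 | ht2
        · exact Or.inr (run_witness_right j (by omega) m hm hrun (Or.inl ht2))
        · -- right terminator is 0 : analyse the left side
          have hexL : ∃ m : ℕ, 1 ≤ m ∧ w' (j - (m : ZMod n)) ≠ -1 := by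
            refine ⟨(j - i).val, ?_, ?_⟩
            · have h' : j - i ≠ 0 := sub_ne_zero.2 (Ne.symm hij)
              have := (ZMod.val_eq_zero (j - i)).not.2 h'
              omega
            · have e0 : (((j - i).val : ℕ) : ZMod n) = j - i := ZMod.natCast_rightInverse (j - i)
              have e : j - (((j - i).val : ℕ) : ZMod n) = i := by rw [e0]; ring
              rw [e]; exact hi
          obtain ⟨m₂, hm₂, htm₂, hrun₂, hmin₂⟩ := find_run_left w' j hexL
          have trich₂ : w' (j - (m₂ : ZMod n)) ≤ -2 ∨ w' (j - (m₂ : ZMod n)) = 0 ∨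
              1 ≤ w' (j - (m₂ : ZMod n)) := by omega
          rcases trich₂ with ht₂ | ht₂ | ht₂
          · exact Or.inl (run_witness_left j (by omega) m₂ hm₂ hrun₂ (Or.inl ht₂))
          · -- both terminators are 0 : forbidden pattern
            exfalso
            have runAll : ∀ l : ℕ, 1 ≤ l → l ≤ m₂ + m - 1 →
                w' (j - (m₂ : ZMod n) + (l : ZMod n)) = -1 := by
              intro l hl hlk
              rcases lt_trichotomy l m₂ with hc | hc | hc
              · have e : j - (m₂ : ZMod n) + (l : ZMod n) = j - ((m₂ - l : ℕ) : ZMod n) := by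
                  have e0 : ((m₂ : ℕ) : ZMod n) = ((m₂ - l : ℕ) : ZMod n) + (l : ZMod n) := by
                    rw [← Nat.cast_add]; congr 1; omega
                  rw [e0]; ring
                rw [e]; exact hrun₂ (m₂ - l) (by omega) (by omega)
              · have e : j - (m₂ : ZMod n) + (l : ZMod n) = j := by
                  rw [show (l : ZMod n) = (m₂ : ZMod n) from by rw [hc]]; ring
                rw [e]; exact hv
              · have e : j - (m₂ : ZMod n) + (l : ZMod n) = j + ((l - m₂ : ℕ) : ZMod n) := by
                  have e0 : ((l : ℕ) : ZMod n) = ((m₂ : ℕ) : ZMod n) + ((l - m₂ : ℕ) : ZMod n) := by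
                    rw [← Nat.cast_add]; congr 1; omega
                  rw [e0]; ring
                rw [e]; exact hrun (l - m₂) (by omega) (by omega)
            have hklen : m₂ + m - 1 ≤ n - 2 := by
              by_contra hbig
              have hle : m₂ + m - 1 ≤ n - 1 := by
                by_contra hbig2
                have hc := runAll n (by omega) (by omega)
                rw [ZMod.natCast_self] at hc
                simp only [add_zero] at hc
                omega
              have hb1 : w' (j - (m₂ : ZMod n) + 1) = -1 := by
                have hc := runAll 1 le_rfl (by omega)
                simpa using hc
              have hbm : w' (j - (m₂ : ZMod n) - 1) = -1 := by
                have hc := runAll (n - 1) (by omega) (by omega)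
                rw [hcast] at hc
                have e : j - (m₂ : ZMod n) + (-1 : ZMod n) = j - (m₂ : ZMod n) - 1 := by ring
                rwa [e] at hc
              rcases h0 (j - (m₂ : ZMod n)) ht₂ with ⟨-, h'⟩ | ⟨h', -⟩ | ⟨h', -⟩ <;> omega
            refine hfb ⟨j - (m₂ : ZMod n), m₂ + m - 1, by omega, by omega, ht₂, runAll, ?_⟩
            have e : j - (m₂ : ZMod n) + ((m₂ + m - 1 + 1 : ℕ) : ZMod n) =
                j + (m : ZMod n) := by
              rw [show m₂ + m - 1 + 1 = m₂ + m from by omega]; push_cast; ring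
            rw [e]; exact ht2
          · have hm₂2 : 2 ≤ m₂ := by
              rcases eq_or_lt_of_le hm₂ with h' | h'
              · rw [← h'] at ht₂; simp at ht₂; omega
              · omega
            exact Or.inl (run_witness_left j (by omega) m₂ hm₂ hrun₂ (Or.inr ⟨hm₂2, ht₂⟩))
        · have hm2 : 2 ≤ m := by
            rcases eq_or_lt_of_le hm with h' | h'
            · rw [← h'] at ht2; simp at ht2; omega
            · omega
          exact Or.inr (run_witness_right j (by omega) m hm hrun (Or.inr ⟨hm2, ht2⟩))

/-- The conversions between normal loop words and band words are mutually inverse, and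
for a normal loop word `w'` the sign sequence of the converted band word is
`δ(w)_j = 𝟙[w'_j ≥ 1]`. -/
theorem loop_band_conversion_inverse (τ : ℕ) (hτ : 1 ≤ τ) :
    (∀ w' : ZMod (3 * τ) → ℤ, IsNormalLoopWord (3 * τ) w' →
        toLoop (3 * τ) (toBand (3 * τ) w') = w') ∧
    (∀ w : ZMod (3 * τ) → ℤ, toBand (3 * τ) (toLoop (3 * τ) w) = w) ∧
    (∀ w' : ZMod (3 * τ) → ℤ, IsNormalLoopWord (3 * τ) w' →
        ∀ j, deltaW (3 * τ) (toBand (3 * τ) w') j = (if 1 ≤ w' j then 1 else 0)) := by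
  have hn : 3 ≤ 3 * τ := by omega
  refine ⟨?_, fun w => toBand_toLoop w, fun w' hw' j => key_delta hn w' hw' j⟩
  intro w' hw'
  funext j
  have k1 := key_delta hn w' hw' (j - 1)
  have k2 := key_delta hn w' hw' j
  have k3 := key_delta hn w' hw' (j + 1)
  simp only [toLoop, k1, k2, k3, toBand]
  ring
end
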